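/- arXiv:2009.04510 — 7 statements merged into one kernel-verified Lean document; each statement's English description precedes it below -/
import Mathlib

section
/- For all integers n ≥ 2, L ≥ 2 and d ≥ 2, the polynomial p_d attains its global minimum over the standard simplex Δ_m at the barycenter x* = (1/m)(1,…,1); that is, p_d(x*) ≤ p_d(x) for every x ∈ Δ_m. -/
/-!
Since `1 / k = ∫₀¹ s ^ (k - 1) ds` and `∑_{M ⊇ S} s ^ (|M| - 1) (1 - s) ^ (n - |M|) = s ^ (|S| - 1)`
for nonempty `S ⊆ V`, expanding the `d`-th powers gives
`p_d(x) = ∫₀¹ ∑_{M ⊆ V} s ^ (|M| - 1) (1 - s) ^ (n - |M|) (∑_{e ⊆ M} x_e) ^ d ds`.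
Each integrand is a nonnegative combination of `d`-th powers of nonnegative linear forms, so `p_d`
is convex on the nonnegative orthant. It is also invariant under permutations of the vertices, and
averaging a point of the simplex over all vertex permutations yields the barycenter, so Jensen's
inequality gives `p_d(x*) ≤ p_d(x)`.
-/

open Finset

/-- The set of edges of the complete `L`-uniform hypergraph on `n` vertices. -/
abbrev Edge (n L : ℕ) := {e : Finset (Fin n) // e.card = L}

/-- The polynomial `p_d(x) = ∑_{(e_1,…,e_d) ∈ E^d} (1/|e_1 ∪ ⋯ ∪ e_d|) x_{e_1} ⋯ x_{e_d}`. -/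
noncomputable def pPoly (n L d : ℕ) (x : Edge n L → ℝ) : ℝ :=
  ∑ t : Fin d → Edge n L,
    ((Finset.univ.biUnion fun i => (t i).1).card : ℝ)⁻¹ * ∏ i, x (t i)

open scoped Pointwise

lemma sum_superset_pow_mul_pow {α R : Type*} [Fintype α] [DecidableEq α] [CommRing R]
    {S : Finset α} (hS : S.Nonempty) (s : R) :
    ∑ M with S ⊆ M, s ^ (#M - 1) * (1 - s) ^ (Fintype.card α - #M) = s ^ (#S - 1) := by
  have hsupersets : ({M | S ⊆ M} : Finset (Finset α)) = Sᶜ.powerset.image (S ∪ ·) := by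
    rw [compl_eq_univ_sdiff, ← Icc_eq_image_powerset (subset_univ S)]
    ext M
    simp
  have hinj : Set.InjOn (S ∪ ·) Sᶜ.powerset := by
    intro T hT T' hT' h
    simp only [coe_powerset, Set.mem_preimage, Set.mem_powerset_iff, coe_subset,
      subset_compl_iff_disjoint_left] at hT hT'
    simpa [union_sdiff_cancel_left hT, union_sdiff_cancel_left hT'] using congr_arg (· \ S) h
  rw [hsupersets, sum_image hinj]
  calc ∑ T ∈ Sᶜ.powerset, s ^ (#(S ∪ T) - 1) * (1 - s) ^ (Fintype.card α - #(S ∪ T))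
      = ∑ T ∈ Sᶜ.powerset, s ^ (#S - 1) * (s ^ #T * (1 - s) ^ (#Sᶜ - #T)) := by
        refine sum_congr rfl fun T hT => ?_
        rw [mem_powerset, subset_compl_iff_disjoint_left] at hT
        have hTS : #T ≤ #Sᶜ := card_le_card (subset_compl_iff_disjoint_left.mpr hT)
        have hS1 : 1 ≤ #S := hS.card_pos
        rw [card_compl] at hTS
        rw [card_union_of_disjoint hT, card_compl, ← mul_assoc, ← pow_add]
        congr 2 <;> omega
    _ = s ^ (#S - 1) := by rw [← mul_sum, sum_pow_mul_eq_add_pow, add_sub_cancel, one_pow, mul_one]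

theorem convexOn_sum {𝕜 E β ι : Type*} [Semiring 𝕜] [PartialOrder 𝕜] [AddCommMonoid E]
    [AddCommMonoid β] [PartialOrder β] [IsOrderedAddMonoid β] [SMul 𝕜 E] [Module 𝕜 β]
    {s : Set E} (hs : Convex 𝕜 s) (t : Finset ι) {f : ι → E → β}
    (hf : ∀ i ∈ t, ConvexOn 𝕜 s (f i)) : ConvexOn 𝕜 s fun x => ∑ i ∈ t, f i x := by
  classical
  induction t using Finset.induction_on with
  | empty => simpa using convexOn_const 0 hs
  | insert i t hi ih =>
    simp only [sum_insert hi]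
    exact (hf i (mem_insert_self i t)).add (ih fun j hj => hf j (mem_insert_of_mem hj))

lemma card_mul_sum_smul_eq {G X R : Type*} [Group G] [Fintype G] [MulAction G X] [Fintype X]
    [MulAction.IsPretransitive G X] [CommSemiring R] (x : X → R) (a : X) :
    Fintype.card X * ∑ g : G, x (g • a) = Fintype.card G * ∑ b, x b := by
  have hconst (b : X) : ∑ g : G, x (g • b) = ∑ g : G, x (g • a) := by
    obtain ⟨h, rfl⟩ := MulAction.exists_smul_eq G a b
    exact Fintype.sum_equiv (Equiv.mulRight h) _ _ fun g => by simp [mul_smul]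
  calc Fintype.card X * ∑ g : G, x (g • a) = ∑ b : X, ∑ g : G, x (g • b) := by
        simp [hconst]
    _ = ∑ g : G, ∑ b, x (g • b) := sum_comm
    _ = ∑ _g : G, ∑ b, x b := sum_congr rfl fun g _ => Equiv.sum_comp (MulAction.toPerm g) x
    _ = Fintype.card G * ∑ b, x b := by simp

variable {n L d : ℕ}

def tupleUnion (t : Fin d → Edge n L) : Finset (Fin n) := univ.biUnion fun i => (t i).1

lemma tupleUnion_nonempty (hL : 0 < L) (hd : 0 < d) (t : Fin d → Edge n L) :
    (tupleUnion t).Nonempty := by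
  have hi : (t ⟨0, hd⟩).1.Nonempty := card_pos.mp (by rw [(t _).2]; exact hL)
  exact hi.mono (subset_biUnion_of_mem (fun i => (t i).1) (mem_univ _))

def massIn (M : Finset (Fin n)) : (Edge n L → ℝ) →ₗ[ℝ] ℝ where
  toFun x := ∑ e with e.1 ⊆ M, x e
  map_add' x y := by simp only [Pi.add_apply, sum_add_distrib]
  map_smul' c x := by simp only [Pi.smul_apply, smul_eq_mul, mul_sum, RingHom.id_apply]

lemma massIn_pow (M : Finset (Fin n)) (x : Edge n L → ℝ) :
    massIn M x ^ d = ∑ t : Fin d → Edge n L, if tupleUnion t ⊆ M then ∏ i, x (t i) else 0 := by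
  simp only [massIn, LinearMap.coe_mk, AddHom.coe_mk, sum_filter, Fintype.sum_pow,
    Fintype.prod_ite_zero, tupleUnion, biUnion_subset, mem_univ, true_implies]
  congr! 3

noncomputable def pIntegrand (n L d : ℕ) (s : ℝ) (x : Edge n L → ℝ) : ℝ :=
  ∑ M : Finset (Fin n), s ^ (#M - 1) * (1 - s) ^ (n - #M) * massIn M x ^ d

lemma pIntegrand_eq_sum (hL : 0 < L) (hd : 0 < d) (s : ℝ) (x : Edge n L → ℝ) :
    pIntegrand n L d s x = ∑ t : Fin d → Edge n L, s ^ (#(tupleUnion t) - 1) * ∏ i, x (t i) := by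
  calc pIntegrand n L d s x
      = ∑ t : Fin d → Edge n L, (∑ M with tupleUnion t ⊆ M,
          s ^ (#M - 1) * (1 - s) ^ (Fintype.card (Fin n) - #M)) * ∏ i, x (t i) := by
        simp only [pIntegrand, massIn_pow, mul_sum, sum_mul, sum_filter, Fintype.card_fin]
        rw [sum_comm]
        simp [ite_mul, mul_ite]
    _ = _ := by simp only [sum_superset_pow_mul_pow (tupleUnion_nonempty hL hd _)]

lemma pPoly_eq_integral (hL : 0 < L) (hd : 0 < d) (x : Edge n L → ℝ) :
    pPoly n L d x = ∫ s in (0 : ℝ)..1, pIntegrand n L d s x := by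
  simp only [pIntegrand_eq_sum hL hd]
  rw [intervalIntegral.integral_finsetSum fun t _ =>
    (by fun_prop : Continuous _).intervalIntegrable _ _]
  refine sum_congr rfl fun t _ => ?_
  have hcard : ((#(tupleUnion t) - 1 : ℕ) : ℝ) + 1 = #(tupleUnion t) := by
    exact_mod_cast Nat.sub_add_cancel (tupleUnion_nonempty hL hd t).card_pos
  show (#(tupleUnion t) : ℝ)⁻¹ * _ = _
  simp [integral_pow, hcard]

lemma continuous_pIntegrand (x : Edge n L → ℝ) : Continuous fun s => pIntegrand n L d s x := by
  unfold pIntegrand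
  fun_prop

lemma convexOn_pIntegrand {s : ℝ} (hs₀ : 0 ≤ s) (hs₁ : s ≤ 1) :
    ConvexOn ℝ (Set.Ici 0) (pIntegrand n L d s) := by
  refine convexOn_sum (convex_Ici 0) _ fun M _ => ConvexOn.smul (by positivity) ?_
  refine ((convexOn_pow (𝕜 := ℝ) d).comp_linearMap (massIn M)).subset ?_ (convex_Ici 0)
  intro x hx
  show 0 ≤ ∑ e with e.1 ⊆ M, x e
  exact sum_nonneg fun e _ => hx e

lemma convexOn_pPoly (hL : 0 < L) (hd : 0 < d) : ConvexOn ℝ (Set.Ici 0) (pPoly n L d) := by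
  simp only [funext (pPoly_eq_integral hL hd), intervalIntegral.integral_of_le zero_le_one]
  refine MeasureTheory.integral_convexOn_of_integrand_ae (convex_Ici 0) ?_ fun x _ => ?_
  · refine MeasureTheory.ae_restrict_of_forall_mem measurableSet_Ioc fun s hs => ?_
    exact convexOn_pIntegrand hs.1.le hs.2
  · exact ((continuous_pIntegrand x).intervalIntegrable 0 1).1

instance : MulAction (Equiv.Perm (Fin n)) (Edge n L) :=
  inferInstanceAs (MulAction _ (Set.powersetCard (Fin n) L))

instance : MulAction.IsPretransitive (Equiv.Perm (Fin n)) (Edge n L) :=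
  Set.powersetCard.isPretransitive

lemma pPoly_comp_smul (σ : Equiv.Perm (Fin n)) (x : Edge n L → ℝ) :
    pPoly n L d (fun e => x (σ • e)) = pPoly n L d x := by
  refine Fintype.sum_equiv (Equiv.piCongrRight fun _ => MulAction.toPerm σ) _ _ fun t => ?_
  have hunion : (univ.biUnion fun i => (σ • t i).1) = σ • univ.biUnion fun i => (t i).1 := by
    rw [smul_finset_def, biUnion_image]
    rfl
  show _ = (#(univ.biUnion fun i => (σ • t i).1) : ℝ)⁻¹ * ∏ i, x (σ • t i)
  rw [hunion, card_smul_finset]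

lemma orbit_average_eq_barycenter (x : Edge n L → ℝ) (hx : ∑ e, x e = 1) :
    ∑ σ : Equiv.Perm (Fin n), ((n.factorial : ℝ)⁻¹ • fun e => x (σ • e)) =
      fun _ => ((n.choose L : ℝ))⁻¹ := by
  ext e
  have h := card_mul_sum_smul_eq (G := Equiv.Perm (Fin n)) x e
  have hm : (Fintype.card (Edge n L) : ℝ) ≠ 0 :=
    Nat.cast_ne_zero.mpr (Fintype.card_pos_iff.mpr ⟨e⟩).ne'
  rw [Fintype.card_perm, Fintype.card_fin, hx, mul_one] at h
  rw [Fintype.card_finset_len, Fintype.card_fin] at h hm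
  simp only [Finset.sum_apply, Pi.smul_apply, smul_eq_mul, ← mul_sum]
  field_simp
  linarith

theorem stmt0_general (n L d : ℕ) (hL : 2 ≤ L) (hd : 2 ≤ d) :
    ∀ x ∈ stdSimplex ℝ (Edge n L),
      pPoly n L d (fun _ => ((n.choose L : ℝ))⁻¹) ≤ pPoly n L d x := by
  intro x hx
  have hweights : ∑ _σ : Equiv.Perm (Fin n), ((n.factorial : ℝ))⁻¹ = 1 := by
    simp [Fintype.card_perm, Nat.factorial_ne_zero]
  calc pPoly n L d (fun _ => ((n.choose L : ℝ))⁻¹)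
      = pPoly n L d (∑ σ : Equiv.Perm (Fin n), ((n.factorial : ℝ))⁻¹ • fun e => x (σ • e)) := by
        rw [orbit_average_eq_barycenter x hx.2]
    _ ≤ ∑ σ : Equiv.Perm (Fin n), ((n.factorial : ℝ))⁻¹ • pPoly n L d (fun e => x (σ • e)) :=
        (convexOn_pPoly (by omega) (by omega)).map_sum_le (fun _ _ => by positivity) hweights
          fun σ _ e => hx.1 (σ • e)
    _ = pPoly n L d x := by simp only [pPoly_comp_smul, ← sum_smul, hweights, one_smul]

/-- `p_d` attains its global minimum over the standard simplex at the barycenter. -/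
theorem stmt0 (n L d : ℕ) (hn : 2 ≤ n) (hL : 2 ≤ L) (hd : 2 ≤ d) :
    ∀ x ∈ stdSimplex ℝ (Edge n L),
      pPoly n L d (fun _ => ((n.choose L : ℝ))⁻¹) ≤ pPoly n L d x :=
  stmt0_general n L d hL hd
end

section
/- Assume that for every subset W ⊆ V with |W| ≤ L(d−2), and additionally |W| ≥ L in case d ≥ 3, the matrix M_W = (1/|W ∪ e ∪ f|)_{e,f ∈ E} is positive semidefinite (for d = 2 the only such set is W = ∅). Then the polynomial p_d is convex on the standard simplex Δ_m. -/
open Finset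

/-- The matrix `M_W = (1/|W ∪ e ∪ f|)_{e,f ∈ E}`. -/
noncomputable def Mmat (n L : ℕ) (W : Finset (Fin n)) : Matrix (Edge n L) (Edge n L) ℝ :=
  Matrix.of fun e f => ((W ∪ e.1 ∪ f.1).card : ℝ)⁻¹

/-!
Write `p_d x = ∑ₜ c t ∏ᵢ x (t i)` with `c t = 1 / |t 0 ∪ ⋯ ∪ t (d-1)|`, a coefficient invariant
under permuting the `d` slots. Along a segment `w s = x + s (y - x)` in the nonnegative orthant the
second derivative of `p_d (w s)` is a sum over ordered pairs of distinct slots `(i, k)`, where slots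
`i` and `k` carry `v = y - x` and the others carry `w s`. By symmetry every pair may be moved to the
first two slots, and that term is `∑ᵣ (∏ⱼ w (r j)) · vᵀ M_{W(r)} v`, where `W(r)` is the union of
the remaining `d - 2` edges; so `|W(r)| ≤ L (d - 2)`, `|W(r)| ≥ L` when `d ≥ 3`, and the term is
nonnegative. Hence `p_d` is convex on the whole nonnegative orthant, in particular on the simplex.
-/

open Matrix

theorem convexOn_of_convexOn_line {E : Type*} [AddCommGroup E] [Module ℝ E] {s : Set E}
    (hs : Convex ℝ s) {f : E → ℝ}
    (h : ∀ x ∈ s, ∀ y ∈ s, ConvexOn ℝ (Set.Icc 0 1) fun t : ℝ => f (x + t • (y - x))) :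
    ConvexOn ℝ s f := by
  refine ⟨hs, fun x hx y hy a b ha hb hab => ?_⟩
  have hline := (h x hx y hy).2 (Set.left_mem_Icc.2 zero_le_one) (Set.right_mem_Icc.2 zero_le_one)
    ha hb hab
  have hpoint : a • x + b • y = x + b • (y - x) := by rw [eq_sub_of_add_eq hab]; module
  simpa [hpoint] using hline

theorem Fintype.sum_pi_fin_succ {β M : Type*} [Fintype β] [AddCommMonoid M] {k : ℕ}
    (F : (Fin (k + 1) → β) → M) : ∑ t, F t = ∑ e, ∑ r : Fin k → β, F (Fin.cons e r) := by
  rw [← (Fin.consEquiv fun _ => β).sum_comp, Fintype.sum_prod_type]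
  rfl

theorem Fin.prod_erase_zero_erase_one {M : Type*} [CommMonoid M] {m : ℕ} (g : Fin (m + 2) → M) :
    ∏ j ∈ (univ.erase 0).erase 1, g j = ∏ j : Fin m, g j.succ.succ := by
  rw [Fin.univ_succ, erase_cons, ← Fin.succ_zero_eq_one]
  change ∏ j ∈ (univ.map (Fin.succEmb _)).erase (Fin.succEmb _ 0), g j = _
  rw [← map_erase, prod_map, Fin.univ_succ, erase_cons, prod_map]
  rfl

theorem Equiv.Perm.exists_apply_zero_apply_one {m : ℕ} {i k : Fin (m + 2)} (hik : i ≠ k) :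
    ∃ σ : Equiv.Perm (Fin (m + 2)), σ 0 = i ∧ σ 1 = k := by
  obtain ⟨σ, hσ⟩ := Equiv.Perm.exists_extending_pair ![(0 : Fin (m + 2)), 1] ![i, k]
    (by intro a b; fin_cases a <;> fin_cases b <;> simp)
    (by intro a b; fin_cases a <;> fin_cases b <;> simp [hik, hik.symm])
  exact ⟨σ, hσ 0, hσ 1⟩

section SlotSum

variable {β : Type*} [Fintype β] {d : ℕ}

-- Differentiating `∑ₜ c t ∏ⱼ w (t j)` along a line only ever produces sums of this shape.
noncomputable def slotSum (c : (Fin d → β) → ℝ) (w : β → ℝ) (S : Finset (Fin d))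
    (g : (Fin d → β) → ℝ) : ℝ :=
  ∑ t, c t * ((∏ j ∈ S, w (t j)) * g t)

theorem hasDerivAt_slotSum_add_smul (c : (Fin d → β) → ℝ) (x v : β → ℝ) (S : Finset (Fin d))
    (g : (Fin d → β) → ℝ) (s : ℝ) :
    HasDerivAt (fun s : ℝ => slotSum c (x + s • v) S g)
      (∑ i ∈ S, slotSum c (x + s • v) (S.erase i) fun t => v (t i) * g t) s := by
  have hprod (t : Fin d → β) : HasDerivAt (fun s : ℝ => ∏ j ∈ S, (x + s • v) (t j))
      (∑ i ∈ S, (∏ j ∈ S.erase i, (x + s • v) (t j)) * v (t i)) s := by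
    simpa using HasDerivAt.fun_finsetProd (u := S) fun i _ =>
      ((hasDerivAt_id s).mul_const (v (t i))).const_add (x (t i))
  refine (HasDerivAt.fun_sum (u := univ) fun t _ =>
    ((hprod t).mul_const (g t)).const_mul (c t)).congr_deriv ?_
  simp only [slotSum, mul_sum, sum_mul]
  rw [sum_comm]
  refine sum_congr rfl fun t _ => sum_congr rfl fun i _ => by ring

theorem slotSum_map_perm {c : (Fin d → β) → ℝ} (hc : ∀ (σ : Equiv.Perm (Fin d)) t, c (t ∘ σ) = c t)
    (w : β → ℝ) (σ : Equiv.Perm (Fin d)) (S : Finset (Fin d)) (g : (Fin d → β) → ℝ) :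
    slotSum c w (S.map σ.toEmbedding) g = slotSum c w S fun t => g (t ∘ σ.symm) := by
  rw [slotSum, ← (Equiv.arrowCongr σ (Equiv.refl β)).sum_comp]
  refine sum_congr rfl fun t _ => ?_
  change c (t ∘ σ.symm) * ((∏ j ∈ S.map σ.toEmbedding, w (t (σ.symm j))) * g (t ∘ σ.symm)) = _
  simp [prod_map, hc]

theorem slotSum_erase_zero_erase_one_nonneg {m : ℕ} {c : (Fin (m + 2) → β) → ℝ}
    (hpsd : ∀ r, (of fun e f => c (Fin.cons e (Fin.cons f r))).PosSemidef)
    {w : β → ℝ} (hw : 0 ≤ w) (v : β → ℝ) :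
    0 ≤ slotSum c w ((univ.erase 0).erase 1) fun t => v (t 1) * v (t 0) := by
  have hsplit : slotSum c w ((univ.erase 0).erase 1) (fun t => v (t 1) * v (t 0)) =
      ∑ r : Fin m → β, (∏ j, w (r j)) *
        (v ⬝ᵥ (of fun e f => c (Fin.cons e (Fin.cons f r))) *ᵥ v) := by
    simp only [slotSum, Fintype.sum_pi_fin_succ (k := m + 1), Fintype.sum_pi_fin_succ (k := m),
      Fin.prod_erase_zero_erase_one, Fin.cons_zero, Fin.cons_one, Fin.cons_succ, dotProduct,
      mulVec, of_apply, mul_sum]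
    refine (sum_congr rfl fun e _ => sum_comm).trans (sum_comm.trans ?_)
    exact sum_congr rfl fun r _ => sum_congr rfl fun e _ => sum_congr rfl fun f _ => by ring
  rw [hsplit]
  exact sum_nonneg fun r _ =>
    mul_nonneg (prod_nonneg fun j _ => hw _) ((hpsd r).dotProduct_mulVec_nonneg v)

theorem convexOn_Ici_sum_mul_prod {m : ℕ} {c : (Fin (m + 2) → β) → ℝ}
    (hc : ∀ (σ : Equiv.Perm (Fin (m + 2))) t, c (t ∘ σ) = c t)
    (hpsd : ∀ r : Fin m → β, (of fun e f => c (Fin.cons e (Fin.cons f r))).PosSemidef) :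
    ConvexOn ℝ (Set.Ici 0) fun x : β → ℝ => ∑ t, c t * ∏ i, x (t i) := by
  refine convexOn_of_convexOn_line (convex_Ici 0) fun x hx y hy => ?_
  set v := y - x
  have hpoly (s : ℝ) : ∑ t, c t * ∏ i, (x + s • v) (t i) = slotSum c (x + s • v) univ 1 := by
    simp [slotSum]
  have hD1 (s : ℝ) := hasDerivAt_slotSum_add_smul c x v univ 1 s
  simp only [hpoly]
  refine convexOn_of_hasDerivWithinAt2_nonneg (convex_Icc 0 1)
    (fun s _ => (hD1 s).continuousAt.continuousWithinAt) (fun s _ => (hD1 s).hasDerivWithinAt)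
    (fun s _ => (HasDerivAt.fun_sum fun i _ =>
      hasDerivAt_slotSum_add_smul c x v (univ.erase i) _ s).hasDerivWithinAt) fun s hs => ?_
  rw [interior_Icc] at hs
  have hw : 0 ≤ x + s • v := (convex_Ici 0).add_smul_sub_mem hx hy (Set.Ioo_subset_Icc_self hs)
  refine sum_nonneg fun i _ => sum_nonneg fun k hk => ?_
  obtain ⟨σ, rfl, rfl⟩ := Equiv.Perm.exists_apply_zero_apply_one (ne_of_mem_erase hk).symm
  rw [show (univ.erase (σ 0)).erase (σ 1) = ((univ.erase 0).erase 1).map σ.toEmbedding by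
    simp [map_erase], slotSum_map_perm hc]
  simpa using slotSum_erase_zero_erase_one_nonneg hpsd hw v

end SlotSum

section EdgeUnion

variable {n L k : ℕ}

def edgeUnion (t : Fin k → Edge n L) : Finset (Fin n) :=
  univ.biUnion fun i => (t i).1

theorem edgeUnion_comp_perm (t : Fin k → Edge n L) (σ : Equiv.Perm (Fin k)) :
    edgeUnion (t ∘ σ) = edgeUnion t := by
  ext a
  simp only [edgeUnion, mem_biUnion, mem_univ, true_and, Function.comp_apply]
  exact (σ.surjective.exists (p := fun i => a ∈ (t i).1)).symm

theorem edgeUnion_cons_cons (e f : Edge n L) (r : Fin k → Edge n L) :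
    edgeUnion (Fin.cons e (Fin.cons f r) : Fin (k + 2) → Edge n L) = edgeUnion r ∪ e.1 ∪ f.1 := by
  ext a
  simp only [edgeUnion, mem_biUnion, mem_univ, true_and, Fin.exists_fin_succ, Fin.cons_zero,
    Fin.cons_succ, union_assoc, mem_union]
  tauto

theorem card_edgeUnion_le (t : Fin k → Edge n L) : (edgeUnion t).card ≤ L * k := by
  calc (edgeUnion t).card ≤ ∑ i, (t i).1.card := card_biUnion_le
    _ = L * k := by simp [(t _).2, mul_comm]

theorem le_card_edgeUnion (t : Fin k → Edge n L) (hk : 0 < k) : L ≤ (edgeUnion t).card :=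
  (t ⟨0, hk⟩).2.symm.trans_le <|
    card_le_card (subset_biUnion_of_mem (fun i => (t i).1) (mem_univ _))

end EdgeUnion

theorem stmt6_general (n L d : ℕ) (hd : 2 ≤ d)
    (hpsd : ∀ W : Finset (Fin n), W.card ≤ L * (d - 2) → (3 ≤ d → L ≤ W.card) →
      (Mmat n L W).PosSemidef) :
    ConvexOn ℝ (stdSimplex ℝ (Edge n L)) (pPoly n L d) := by
  obtain ⟨m, rfl⟩ : ∃ m, d = m + 2 := ⟨d - 2, by omega⟩
  have hM (r : Fin m → Edge n L) :
      (of fun e f => ((edgeUnion (Fin.cons e (Fin.cons f r))).card : ℝ)⁻¹) =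
        Mmat n L (edgeUnion r) := by
    ext e f
    simp [Mmat, edgeUnion_cons_cons]
  have hconv := convexOn_Ici_sum_mul_prod (c := fun t => ((edgeUnion t).card : ℝ)⁻¹)
    (fun σ t => by simp only [edgeUnion_comp_perm]) fun r => hM r ▸
      hpsd _ (by simpa using card_edgeUnion_le r) fun h => le_card_edgeUnion r (by omega)
  exact hconv.subset (fun x hx => hx.1) (convex_stdSimplex ℝ _)

/-- If `M_W` is positive semidefinite for every `W ⊆ V` with `|W| ≤ L(d−2)`
(and `|W| ≥ L` in case `d ≥ 3`), then `p_d` is convex on the standard simplex. -/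
theorem stmt6 (n L d : ℕ) (hn : 2 ≤ n) (hL : 2 ≤ L) (hd : 2 ≤ d)
    (hpsd : ∀ W : Finset (Fin n), W.card ≤ L * (d - 2) → (3 ≤ d → L ≤ W.card) →
      (Mmat n L W).PosSemidef) :
    ConvexOn ℝ (stdSimplex ℝ (Edge n L)) (pPoly n L d) :=
  stmt6_general n L d hd hpsd
end

section
/- Let L ≥ 2 and d ≥ 3. The following two assertions are equivalent: (i) the matrix M_W = (1/|W ∪ e ∪ f|)_{e,f ∈ E} is positive semidefinite for every set W of the form W = e_1 ∪ ⋯ ∪ e_{d−2} with e_1,…,e_{d−2} ∈ E; (ii) for every integer p with L ≤ p ≤ L(d−2), the matrix M_p is positive semidefinite, where, for a set U of cardinality n − p and F = {e ⊆ U : |e| ≤ L}, M_p is the F×F matrix with entries (M_p)_{e,f} = 1/(p + |e ∪ f|). -/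
open Finset

/-- For a subset `U ⊆ V`, the index set `F = {e ⊆ U : |e| ≤ L}`. -/
abbrev SmallSub (n L : ℕ) (U : Finset (Fin n)) := {e : Finset (Fin n) // e ⊆ U ∧ e.card ≤ L}

/-- The matrix `M_p = (1/(p + |e ∪ f|))_{e,f ∈ F}`, for `F = {e ⊆ U : |e| ≤ L}`. -/
noncomputable def Mpmat (n L p : ℕ) (U : Finset (Fin n)) :
    Matrix (SmallSub n L U) (SmallSub n L U) ℝ :=
  Matrix.of fun e f => (((p + (e.1 ∪ f.1).card : ℕ)) : ℝ)⁻¹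
/-! Both matrices are principal submatrices of each other, up to reindexing. If
`W = e_1 ∪ ⋯ ∪ e_{d-2}` has `p` elements, then `|W ∪ e ∪ f| = p + |(e \ W) ∪ (f \ W)|`,
so `M_W` is `M_p` (for `U = Wᶜ`) reindexed by `e ↦ e \ W`. Conversely, when `L ≤ |W|`,
every `e ⊆ Wᶜ` with `|e| ≤ L` can be padded with elements of `W` to an edge `g(e)`, and
`M_p` is `M_W` reindexed by `g`; any `W` with `L ≤ |W| ≤ L(d-2)` is a union of `d - 2` edges. -/

theorem exists_card_eq_biUnion_eq_of_card_le_mul {α : Type*} [DecidableEq α] {L k : ℕ}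
    {W : Finset α} (hLW : L ≤ #W) (hWk : #W ≤ L * k) :
    ∃ es : Fin k → Finset α, (∀ r, #(es r) = L) ∧ univ.biUnion es = W := by
  induction k generalizing W with
  | zero =>
    refine ⟨Fin.elim0, Fin.rec0, ?_⟩
    simpa [eq_comm] using hWk
  | succ k ih =>
    rcases Nat.eq_zero_or_pos k with rfl | hk
    · exact ⟨fun _ => W, fun _ => le_antisymm (by simpa using hWk) hLW, by simp⟩
    obtain ⟨W', hW'W, hW'⟩ := exists_subset_card_eq (min_le_right (L * k) #W)
    obtain ⟨es, hes, hesW'⟩ := ih (W := W')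
      (hW' ▸ le_min (Nat.le_mul_of_pos_right L hk) hLW) (hW' ▸ min_le_left _ _)
    have hrest : #(W \ W') ≤ L := by
      rw [card_sdiff_of_subset hW'W, hW']
      rw [Nat.mul_succ] at hWk
      omega
    obtain ⟨B, hB, hBW, hBL⟩ := exists_subsuperset_card_eq sdiff_subset hrest hLW
    refine ⟨Fin.cons B es, Fin.cases hBL hes, ?_⟩
    ext x
    simp only [mem_biUnion, mem_univ, true_and, Fin.exists_fin_succ, Fin.cons_zero,
      Fin.cons_succ]
    constructor
    · rintro (hx | ⟨r, hx⟩)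
      · exact hBW hx
      · exact hW'W (hesW' ▸ mem_biUnion.2 ⟨r, mem_univ r, hx⟩)
    · intro hx
      by_cases hx' : x ∈ W'
      · rw [← hesW'] at hx'
        simpa using Or.inr hx'
      · exact Or.inl (hB (mem_sdiff.2 ⟨hx, hx'⟩))

theorem card_union_union_eq_card_add_card_sdiff {α : Type*} [DecidableEq α] (W s t : Finset α) :
    #(W ∪ s ∪ t) = #W + #((s ∪ t) \ W) := by
  rw [union_assoc, ← card_union_of_disjoint disjoint_sdiff, union_sdiff_self_eq_union]

theorem sdiff_eq_of_subset_of_subset_union {α : Type*} [DecidableEq α] {W s t : Finset α}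
    (hst : s ⊆ t) (hts : t ⊆ s ∪ W) (hsW : Disjoint s W) : t \ W = s := by
  refine subset_antisymm ?_ ?_
  · calc t \ W ⊆ (s ∪ W) \ W := sdiff_subset_sdiff hts subset_rfl
      _ = s := by rw [union_sdiff_right, hsW.sdiff_eq_left]
  · exact hsW.sdiff_eq_left ▸ sdiff_subset_sdiff hst subset_rfl

def edgeSdiff {n L : ℕ} (W : Finset (Fin n)) (e : Edge n L) : SmallSub n L Wᶜ :=
  ⟨e.1 \ W, fun _ hx => mem_compl.2 (mem_sdiff.1 hx).2,
    (card_le_card sdiff_subset).trans e.2.le⟩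

theorem Mmat_eq_submatrix_Mpmat (n L : ℕ) (W : Finset (Fin n)) :
    Mmat n L W = (Mpmat n L #W Wᶜ).submatrix (edgeSdiff W) (edgeSdiff W) := by
  ext e f
  simp only [Mmat, Mpmat, edgeSdiff, Matrix.submatrix_apply, Matrix.of_apply,
    card_union_union_eq_card_add_card_sdiff, union_sdiff_distrib]

theorem exists_Mpmat_eq_submatrix_Mmat {n L : ℕ} {W : Finset (Fin n)} (hLW : L ≤ #W) :
    ∃ g : SmallSub n L Wᶜ → Edge n L, Mpmat n L #W Wᶜ = (Mmat n L W).submatrix g g := by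
  have hext (e : SmallSub n L Wᶜ) : ∃ g, e.1 ⊆ g ∧ g ⊆ e.1 ∪ W ∧ #g = L :=
    exists_subsuperset_card_eq subset_union_left e.2.2
      (hLW.trans (card_le_card subset_union_right))
  choose g heg hge hgL using hext
  have hg_sdiff (e : SmallSub n L Wᶜ) : g e \ W = e.1 :=
    sdiff_eq_of_subset_of_subset_union (heg e) (hge e) (subset_compl_iff_disjoint_right.1 e.2.1)
  refine ⟨fun e => ⟨g e, hgL e⟩, ?_⟩
  ext e f
  simp only [Mmat, Mpmat, Matrix.submatrix_apply, Matrix.of_apply,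
    card_union_union_eq_card_add_card_sdiff, union_sdiff_distrib, hg_sdiff]

theorem Mpmat_empty_posSemidef (n L p : ℕ) : (Mpmat n L p ∅).PosSemidef := by
  have hempty (e : SmallSub n L ∅) : e.1 = ∅ := subset_empty.1 e.2.1
  have : Subsingleton (SmallSub n L ∅) :=
    ⟨fun e f => Subtype.ext ((hempty e).trans (hempty f).symm)⟩
  convert Matrix.PosSemidef.diagonal (d := fun _ : SmallSub n L ∅ => ((p : ℕ) : ℝ)⁻¹)
    fun _ => by positivity
  ext e f
  rw [Subsingleton.elim e f]
  simp [Mpmat, hempty]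

theorem stmt7_general (n L d : ℕ) (hd : 3 ≤ d) :
    (∀ es : Fin (d - 2) → Edge n L,
        (Mmat n L (Finset.univ.biUnion fun r => (es r).1)).PosSemidef)
      ↔
    (∀ p : ℕ, L ≤ p → p ≤ L * (d - 2) →
        ∀ U : Finset (Fin n), U.card = n - p → (Mpmat n L p U).PosSemidef) := by
  constructor
  · intro H p hLp hpd U hU
    rcases le_or_gt p n with hpn | hnp
    · obtain ⟨W, rfl⟩ : ∃ W, U = Wᶜ := ⟨Uᶜ, (compl_compl U).symm⟩
      obtain rfl : #W = p := by
        have hWn : #W ≤ n := by simpa using card_le_univ W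
        rw [card_compl, Fintype.card_fin] at hU
        omega
      obtain ⟨es, hesL, hes⟩ := exists_card_eq_biUnion_eq_of_card_le_mul hLp hpd
      obtain ⟨g, hg⟩ := exists_Mpmat_eq_submatrix_Mmat hLp
      subst hes
      exact hg ▸ (H fun r => ⟨es r, hesL r⟩).submatrix g
    · -- `n - p` truncates to `0`, so `U = ∅` and `M_p` is the `1 × 1` matrix `(1/p)`.
      rw [card_eq_zero.1 (by omega : #U = 0)]
      exact Mpmat_empty_posSemidef n L p
  · intro H es
    set W := univ.biUnion fun r => (es r).1
    have hLW : L ≤ #W := by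
      rw [← (es ⟨0, by omega⟩).2]
      exact card_le_card (subset_biUnion_of_mem (fun r => (es r).1) (mem_univ _))
    have hWL : #W ≤ L * (d - 2) := by
      simpa [mul_comm] using card_biUnion_le_card_mul univ _ L fun r _ => (es r).2.le
    rw [Mmat_eq_submatrix_Mpmat]
    exact (H #W hLW hWL Wᶜ (by simp [card_compl])).submatrix _

/-- For `L ≥ 2` and `d ≥ 3`: `M_W ⪰ 0` for all `W = e_1 ∪ ⋯ ∪ e_{d−2}` with
`e_1,…,e_{d−2} ∈ E` if and only if `M_p ⪰ 0` for all `L ≤ p ≤ L(d−2)`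
(for every set `U` of cardinality `n − p`). -/
theorem stmt7 (n L d : ℕ) (hn : 2 ≤ n) (hL : 2 ≤ L) (hd : 3 ≤ d) :
    (∀ es : Fin (d - 2) → Edge n L,
        (Mmat n L (Finset.univ.biUnion fun r => (es r).1)).PosSemidef)
      ↔
    (∀ p : ℕ, L ≤ p → p ≤ L * (d - 2) →
        ∀ U : Finset (Fin n), U.card = n - p → (Mpmat n L p U).PosSemidef) :=
  stmt7_general n L d hd
end

section
/- For all integers i, j with k ≤ i, j ≤ N − k, the identity Σ_{t=0}^{min(i,j)} β^t_{i,j,k} · (1/(p+i+j−t)) = Σ_{u=0}^{min(i,j)} c(u) b(u,i) b(u,j) ∫_0^1 g(u,z) z^{i+j} dz holds, where g(u,z) = z^{p−1}((1−z)/z)^u for z ∈ (0,1]. -/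
open Finset intervalIntegral

/-- `b(u,i) := C(N−k−u, i−u)`, with the convention that it is `0` when `i − u < 0`
(negative lower index). -/
noncomputable def bB (N k u i : ℕ) : ℝ :=
  if u ≤ i then ((N - k - u).choose (i - u) : ℝ) else 0

/-- `c(u) := C(N−2k, N−k−u)`, with the convention that it is `0` when `N − k − u < 0`
(negative lower index). -/
noncomputable def cC (N k u : ℕ) : ℝ :=
  if u ≤ N - k then ((N - 2 * k).choose (N - k - u) : ℝ) else 0

/-- `β^t_{i,j,k} := ∑_{u=0}^{N} (−1)^{u−t} C(u,t) c(u) b(u,i) b(u,j)`. -/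
noncomputable def betaCoef (N k i j t : ℕ) : ℝ :=
  ∑ u ∈ Finset.range (N + 1),
    (-1 : ℝ) ^ (u - t) * (u.choose t : ℝ) * cC N k u * bB N k u i * bB N k u j

/-!
Expanding `(1 - z)^u` binomially turns `∫₀¹ z^m (1 - z)^u dz` into
`∑_t (-1)^(u-t) C(u,t) / (m + u - t + 1)`. For `u ≤ min(i,j)` the integrand
`z^(p-1) ((1-z)/z)^u z^(i+j)` is `z^(p-1+i+j-u) (1-z)^u` on `(0,1]`, so the right-hand side
is a double sum over `t ≤ u ≤ min(i,j)`. On the left, `b(u,i) b(u,j)` vanishes for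
`u > min(i,j)` and `C(u,t)` vanishes for `t > u`, so exchanging the sums in the `β^t` gives
the same double sum.
-/

theorem integral_pow_mul_one_sub_pow (m u : ℕ) :
    ∫ z in (0:ℝ)..1, z ^ m * (1 - z) ^ u
      = ∑ t ∈ range (u + 1),
          (-1 : ℝ) ^ (u - t) * u.choose t * (((m + u - t : ℕ) : ℝ) + 1)⁻¹ := by
  have expand : ∀ z : ℝ, z ^ m * (1 - z) ^ u
      = ∑ t ∈ range (u + 1), (-1 : ℝ) ^ (u - t) * u.choose t * z ^ (m + u - t) := by
    intro z
    rw [sub_eq_add_neg, add_pow, mul_sum]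
    refine sum_congr rfl fun t ht => ?_
    rw [show m + u - t = m + (u - t) by have := mem_range.1 ht; omega, one_pow, neg_pow, pow_add]
    ring
  simp_rw [expand]
  rw [integral_finsetSum fun t _ => (by fun_prop : Continuous _).intervalIntegrable 0 1]
  refine sum_congr rfl fun t _ => ?_
  rw [integral_const_mul, integral_pow]
  norm_num

theorem integral_pow_mul_div_pow_mul_pow (a : ℕ) {u n : ℕ} (hun : u ≤ n) :
    ∫ z in (0:ℝ)..1, z ^ a * ((1 - z) / z) ^ u * z ^ n
      = ∑ t ∈ range (u + 1),
          (-1 : ℝ) ^ (u - t) * u.choose t * (((a + n - t : ℕ) : ℝ) + 1)⁻¹ := by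
  obtain ⟨d, rfl⟩ := Nat.exists_eq_add_of_le hun
  have on_Ioc : ∀ z ∈ Set.uIoc (0:ℝ) 1,
      z ^ a * ((1 - z) / z) ^ u * z ^ (u + d) = z ^ (a + d) * (1 - z) ^ u := by
    intro z hz
    rw [Set.uIoc_of_le zero_le_one] at hz
    have hz0 : z ≠ 0 := hz.1.ne'
    rw [div_pow, pow_add, pow_add]
    field_simp
  rw [integral_congr_ae (MeasureTheory.ae_of_all _ on_Ioc), integral_pow_mul_one_sub_pow]
  refine sum_congr rfl fun t ht => ?_
  rw [show a + d + u - t = a + (u + d) - t by have := mem_range.1 ht; omega]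

theorem bB_eq_zero_of_lt {N k u i : ℕ} (h : i < u) : bB N k u i = 0 :=
  if_neg (by omega)

theorem betaCoef_eq_sum_range_min {N k i j : ℕ} (h : min i j ≤ N) (t : ℕ) :
    betaCoef N k i j t = ∑ u ∈ range (min i j + 1),
      (-1 : ℝ) ^ (u - t) * u.choose t * cC N k u * bB N k u i * bB N k u j := by
  refine (sum_subset (range_subset_range.2 (by omega)) fun u _ hu => ?_).symm
  obtain hiu | hju : i < u ∨ j < u := by rw [mem_range] at hu; omega
  · simp [bB_eq_zero_of_lt hiu]
  · simp [bB_eq_zero_of_lt hju]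

theorem stmt10_general (p N k : ℕ) (hp : 1 ≤ p)
    (i j : ℕ) (hiN : i ≤ N - k) :
    (∑ t ∈ Finset.range (min i j + 1),
        betaCoef N k i j t * ((p + i + j - t : ℕ) : ℝ)⁻¹)
      = ∑ u ∈ Finset.range (min i j + 1),
          cC N k u * bB N k u i * bB N k u j *
            ∫ z in (0:ℝ)..1, (z ^ (p - 1) * ((1 - z) / z) ^ u) * z ^ (i + j) := by
  set F : ℕ → ℕ → ℝ := fun u t => (-1 : ℝ) ^ (u - t) * u.choose t * cC N k u *
    bB N k u i * bB N k u j * ((p + i + j - t : ℕ) : ℝ)⁻¹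
  calc _ = ∑ t ∈ range (min i j + 1), ∑ u ∈ range (min i j + 1), F u t := by
        refine sum_congr rfl fun t _ => ?_
        rw [betaCoef_eq_sum_range_min (by omega), sum_mul]
    _ = ∑ u ∈ range (min i j + 1), ∑ t ∈ range (u + 1), F u t := by
        rw [sum_comm]
        refine sum_congr rfl fun u hu => (sum_subset (range_subset_range.2 ?_) ?_).symm
        · rw [mem_range] at hu; omega
        · intro t _ ht
          rw [mem_range, not_lt] at ht
          simp [F, Nat.choose_eq_zero_of_lt (show u < t by omega)]
    _ = _ := by
        refine sum_congr rfl fun u hu => ?_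
        rw [mem_range] at hu
        rw [integral_pow_mul_div_pow_mul_pow _ (by omega), mul_sum]
        refine sum_congr rfl fun t ht => ?_
        rw [mem_range] at ht
        have hden : (((p - 1 + (i + j) - t : ℕ) : ℝ) + 1) = ((p + i + j - t : ℕ) : ℝ) := by
          rw [show p + i + j - t = p - 1 + (i + j) - t + 1 by omega, Nat.cast_succ]
        rw [hden]
        ring

/-- The integral identity
`∑_{t=0}^{min(i,j)} β^t_{i,j,k}/(p+i+j−t) = ∑_{u=0}^{min(i,j)} c(u)b(u,i)b(u,j) ∫_0^1 g(u,z) z^{i+j} dz`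
with `g(u,z) = z^{p−1}((1−z)/z)^u`. -/
theorem stmt10 (p N k : ℕ) (hp : 1 ≤ p) (hk : k ≤ N / 2)
    (i j : ℕ) (hki : k ≤ i) (hiN : i ≤ N - k) (hkj : k ≤ j) (hjN : j ≤ N - k) :
    (∑ t ∈ Finset.range (min i j + 1),
        betaCoef N k i j t * ((p + i + j - t : ℕ) : ℝ)⁻¹)
      = ∑ u ∈ Finset.range (min i j + 1),
          cC N k u * bB N k u i * bB N k u j *
            ∫ z in (0:ℝ)..1, (z ^ (p - 1) * ((1 - z) / z) ^ u) * z ^ (i + j) :=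
  stmt10_general p N k hp i j hiN
end

section
/- For degree d = 3 and edge size L = 2, the polynomial f_3 attains its global minimum over the standard simplex Δ_m at the barycenter x* = (1/m)(1,…,1); that is, f_3(x*) ≤ f_3(x) for every x ∈ Δ_m. -/
/-!
Write `f_3(x) = T(x, x, x)` for the trilinear form with coefficients
`C(f, g, h) = 1 / (|f| |f ∪ g| |f ∪ g ∪ h|)`, and let `q_e(y)` be the `e`-th partial derivative of
`x ↦ T(x, x, x)` at `y`, a quadratic form in `y`. For `x₀` the barycentre and `y = x - x₀`,
`f_3(x) - f_3(x₀) = ∑ y_e q_e(x₀) + (2/3) ∑ x₀_e q_e(y) + (1/3) ∑ x_e q_e(y)`.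
The linear term vanishes: `q_e(x₀)` does not depend on `e` because vertex permutations act
transitively on edges, and `∑ y_e = 0`. The other two terms are nonnegative because every `q_e`
is positive semidefinite: for `L = 2` the entries of its Gram matrix depend only on the sizes of
`e ∩ f`, `e ∩ g`, `f ∩ g` and `e ∩ f ∩ g`, which makes an explicit sum-of-squares certificate
checkable by a finite case analysis.
-/

open Finset

/-- The polynomial `f_d(x) = ∑_{(e_1,…,e_d) ∈ E^d} ∏_{i=1}^d x_{e_i}/|e_1 ∪ ⋯ ∪ e_i|`. -/
noncomputable def fPoly (n L d : ℕ) (x : Edge n L → ℝ) : ℝ :=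
  ∑ t : Fin d → Edge n L,
    ∏ i, x (t i) / (((Finset.Iic i).biUnion fun r => (t r).1).card : ℝ)

lemma Fintype.sum_fun_fin_three {α M : Type*} [Fintype α] [AddCommMonoid M] (F : α → α → α → M) :
    ∑ t : Fin 3 → α, F (t 0) (t 1) (t 2) = ∑ a, ∑ b, ∑ c, F a b c := by
  rw [← (Fin.consEquiv fun _ => α).sum_comp, Fintype.sum_prod_type]
  refine Finset.sum_congr rfl fun a _ => ?_
  rw [← (Fin.consEquiv fun _ => α).sum_comp, Fintype.sum_prod_type]
  refine Finset.sum_congr rfl fun b _ => ?_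
  rw [← (Equiv.funUnique (Fin 1) α).symm.sum_comp]
  rfl

section FinsetCounting

variable {α : Type*} [DecidableEq α]

lemma Finset.card_inter_add_card_inter_le (s t u : Finset α) :
    #(s ∩ t) + #(s ∩ u) ≤ #s + #(s ∩ t ∩ u) := by
  have h := card_union_add_card_inter (s ∩ t) (s ∩ u)
  rw [← inter_inter_distrib_left, ← inter_assoc] at h
  have : #(s ∩ t ∪ s ∩ u) ≤ #s := card_le_card (union_subset inter_subset_left inter_subset_left)
  omega

lemma Finset.card_union_union_add (s t u : Finset α) :
    #(s ∪ t ∪ u) + #(s ∩ t) + #(s ∩ u) + #(t ∩ u) = #s + #t + #u + #(s ∩ t ∩ u) := by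
  have h₁ := card_union_add_card_inter (s ∪ t) u
  have h₂ := card_union_add_card_inter (s ∩ u) (t ∩ u)
  have h₃ := card_union_add_card_inter s t
  rw [union_inter_distrib_right] at h₁
  rw [show s ∩ u ∩ (t ∩ u) = s ∩ t ∩ u by ext; simp] at h₂
  omega

lemma Finset.sum_boole_mul_boole (u s t : Finset α) :
    ∑ c ∈ u, (if c ∈ s then (1 : ℝ) else 0) * (if c ∈ t then 1 else 0) = #(u ∩ s ∩ t) := by
  simp only [ite_zero_mul_ite_zero, one_mul, sum_boole, filter_and, filter_mem_eq_inter]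
  rw [← inter_inter_distrib_left, inter_assoc]

lemma Finset.sum_compl_boole_mul_boole [Fintype α] (u s t : Finset α) :
    ∑ c ∈ uᶜ, (if c ∈ s then (1 : ℝ) else 0) * (if c ∈ t then 1 else 0)
      = #(s ∩ t) - #(u ∩ s ∩ t) := by
  rw [eq_sub_iff_add_eq, ← sum_boole_mul_boole, sum_compl_add_sum, sum_boole_mul_boole,
    univ_inter]

lemma Finset.sum_sign_mul_sign (u s t : Finset α) :
    ∑ c ∈ u, (if c ∈ s then (1 : ℝ) else -1) * (if c ∈ t then 1 else -1)
      = 4 * #(u ∩ s ∩ t) - 2 * #(u ∩ s) - 2 * #(u ∩ t) + #u := by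
  have hsign : ∀ c, (if c ∈ s then (1 : ℝ) else -1) * (if c ∈ t then 1 else -1)
      = 4 * ((if c ∈ s then 1 else 0) * (if c ∈ t then 1 else 0))
        - 2 * (if c ∈ s then 1 else 0) - 2 * (if c ∈ t then 1 else 0) + 1 := by
    intro c; split_ifs <;> norm_num
  simp only [hsign, sum_add_distrib, sum_sub_distrib, ← mul_sum, sum_boole_mul_boole, sum_boole,
    filter_mem_eq_inter, sum_const, nsmul_eq_mul, mul_one]

end FinsetCounting

section QuadraticSums

variable {ι κ : Type*} [Fintype ι]

lemma sq_sum_mul_eq_sum_sum (v y : ι → ℝ) :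
    (∑ f, v f * y f) ^ 2 = ∑ f, ∑ g, v f * v g * (y f * y g) := by
  rw [sq, sum_mul_sum]
  exact sum_congr rfl fun f _ => sum_congr rfl fun g _ => by ring

lemma sum_sq_sum_mul_eq_sum_sum (s : Finset κ) (v : κ → ι → ℝ) (y : ι → ℝ) :
    ∑ c ∈ s, (∑ f, v c f * y f) ^ 2 = ∑ f, ∑ g, (∑ c ∈ s, v c f * v c g) * (y f * y g) := by
  simp only [sq_sum_mul_eq_sum_sum, sum_mul]
  exact sum_comm.trans (sum_congr rfl fun f _ => sum_comm)

lemma sum_mul_sq_eq_sum_sum [DecidableEq ι] (d y : ι → ℝ) :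
    ∑ f, d f * y f ^ 2 = ∑ f, ∑ g, (if f = g then d f else 0) * (y f * y g) := by
  simp [sq]

end QuadraticSums

section TrilinForm

variable {ι : Type*} [Fintype ι] (C : ι → ι → ι → ℝ)

def trilinForm (u v w : ι → ℝ) : ℝ :=
  ∑ f, ∑ g, ∑ h, C f g h * u f * v g * w h

/-- The partial derivative in direction `e` of the cubic `x ↦ trilinForm C x x x` at `y`. -/
def cubicGrad (y : ι → ℝ) (e : ι) : ℝ :=
  ∑ f, ∑ g, (C e f g + C f e g + C f g e) * y f * y g

lemma trilinForm_add_add_add (a b : ι → ℝ) :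
    trilinForm C (a + b) (a + b) (a + b) =
      trilinForm C a a a + (trilinForm C b a a + trilinForm C a b a + trilinForm C a a b)
        + (trilinForm C b b a + trilinForm C b a b + trilinForm C a b b) + trilinForm C b b b := by
  simp only [trilinForm, Pi.add_apply, ← sum_add_distrib]
  exact sum_congr rfl fun f _ => sum_congr rfl fun g _ => sum_congr rfl fun h _ => by ring

lemma sum_mul_cubicGrad (z y : ι → ℝ) :
    ∑ e, z e * cubicGrad C y e = trilinForm C z y y + trilinForm C y z y + trilinForm C y y z := by
  have hmid : trilinForm C y z y = ∑ e, ∑ f, ∑ g, C f e g * y f * z e * y g := sum_comm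
  have hlast : trilinForm C y y z = ∑ e, ∑ f, ∑ g, C f g e * y f * y g * z e :=
    (sum_congr rfl fun f _ => sum_comm).trans sum_comm
  rw [hmid, hlast, trilinForm]
  simp only [cubicGrad, mul_sum, ← sum_add_distrib]
  exact sum_congr rfl fun e _ => sum_congr rfl fun f _ => sum_congr rfl fun g _ => by ring

lemma cubicGrad_eq_sum_sum (y : ι → ℝ) (e : ι) :
    cubicGrad C y e = ∑ f, ∑ g,
      (C e f g + C f e g + C f g e + C e g f + C g e f + C g f e) / 2 * (y f * y g) := by
  have hswap : cubicGrad C y e = ∑ f, ∑ g, (C e g f + C g e f + C g f e) * y f * y g := by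
    rw [cubicGrad, sum_comm]
    exact sum_congr rfl fun f _ => sum_congr rfl fun g _ => by ring
  calc cubicGrad C y e = (cubicGrad C y e + cubicGrad C y e) / 2 := by ring
    _ = _ := by
      nth_rewrite 2 [hswap]
      simp only [cubicGrad, ← sum_add_distrib, sum_div]
      exact sum_congr rfl fun f _ => sum_congr rfl fun g _ => by ring

lemma cubicGrad_const_apply_equiv (σ : ι ≃ ι) (hσ : ∀ f g h, C (σ f) (σ g) (σ h) = C f g h)
    (c : ℝ) (e : ι) : cubicGrad C (fun _ => c) (σ e) = cubicGrad C (fun _ => c) e := by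
  refine (Fintype.sum_equiv σ _ _ fun f => Fintype.sum_equiv σ _ _ fun g => ?_).symm
  simp only [hσ]

theorem trilinForm_self_le_of_cubicGrad {x x₀ : ι → ℝ} (hx : ∀ e, 0 ≤ x e)
    (hx₀ : ∀ e, 0 ≤ x₀ e) (hsum : ∑ e, x e = ∑ e, x₀ e)
    (hcrit : ∃ c, ∀ e, cubicGrad C x₀ e = c) (hpsd : ∀ y e, 0 ≤ cubicGrad C y e) :
    trilinForm C x₀ x₀ x₀ ≤ trilinForm C x x x := by
  obtain ⟨c, hc⟩ := hcrit
  set y := x - x₀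
  have hxy : x = x₀ + y := by simp [y]
  have hy : ∑ e, y e = 0 := by simp [y, sum_sub_distrib, hsum]
  have hlin : ∑ e, y e * cubicGrad C x₀ e = 0 := by simp [hc, ← sum_mul, hy]
  have hxq : ∑ e, x e * cubicGrad C y e =
      ∑ e, x₀ e * cubicGrad C y e + ∑ e, y e * cubicGrad C y e := by
    simp [hxy, add_mul, sum_add_distrib]
  have h₀ : 0 ≤ ∑ e, x₀ e * cubicGrad C y e := sum_nonneg fun e _ => mul_nonneg (hx₀ e) (hpsd y e)
  have h₁ : 0 ≤ ∑ e, x e * cubicGrad C y e := sum_nonneg fun e _ => mul_nonneg (hx e) (hpsd y e)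
  simp only [sum_mul_cubicGrad] at hlin h₀ h₁ hxq
  rw [hxy, trilinForm_add_add_add]
  linarith

end TrilinForm

section Edges

variable {n L : ℕ}

noncomputable def edgeCoeff (f g h : Edge n L) : ℝ :=
  ((f.1.card : ℝ) * (f.1 ∪ g.1).card * (f.1 ∪ g.1 ∪ h.1).card)⁻¹

lemma fPoly_three_eq_trilinForm (x : Edge n L → ℝ) :
    fPoly n L 3 x = trilinForm edgeCoeff x x x := by
  have hterm : ∀ t : Fin 3 → Edge n L,
      ∏ i, x (t i) / ((Iic i).biUnion fun r => (t r).1).card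
        = edgeCoeff (t 0) (t 1) (t 2) * x (t 0) * x (t 1) * x (t 2) := by
    intro t
    rw [Fin.prod_univ_three, show Iic (0 : Fin 3) = {0} by decide,
      show Iic (1 : Fin 3) = {0, 1} by decide, show Iic (2 : Fin 3) = {0, 1, 2} by decide]
    simp only [edgeCoeff, singleton_biUnion, biUnion_insert, union_assoc]
    ring
  rw [fPoly, sum_congr rfl fun t _ => hterm t]
  exact Fintype.sum_fun_fin_three fun f g h => edgeCoeff f g h * x f * x g * x h

lemma Edge.card_union (f g : Edge n L) : (#(f.1 ∪ g.1) : ℝ) = 2 * L - #(f.1 ∩ g.1) := by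
  have h : ((#(f.1 ∪ g.1) + #(f.1 ∩ g.1) : ℕ) : ℝ) = (L + L : ℕ) := by
    rw [card_union_add_card_inter, f.2, g.2]
  push_cast at h
  linarith

lemma Edge.eq_iff_card_inter (f g : Edge n L) : f = g ↔ #(f.1 ∩ g.1) = L := by
  refine ⟨fun h => by rw [h, inter_self, g.2], fun h => Subtype.ext ?_⟩
  have hf : f.1 ∩ g.1 = f.1 := eq_of_subset_of_card_le inter_subset_left (by rw [h, f.2])
  have hg : f.1 ∩ g.1 = g.1 := eq_of_subset_of_card_le inter_subset_right (by rw [h, g.2])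
  rw [← hf, hg]

section Permutations

open scoped Pointwise

def Edge.permute (π : Equiv.Perm (Fin n)) : Edge n L ≃ Edge n L where
  toFun f := ⟨π • f.1, (card_smul_finset π f.1).trans f.2⟩
  invFun f := ⟨π⁻¹ • f.1, (card_smul_finset _ f.1).trans f.2⟩
  left_inv f := Subtype.ext (inv_smul_smul π f.1)
  right_inv f := Subtype.ext (smul_inv_smul π f.1)

lemma Edge.exists_permute_eq (e e' : Edge n L) : ∃ π, Edge.permute π e = e' := by
  have := Set.powersetCard.isPretransitive (α := Fin n) (n := L)
  obtain ⟨π, hπ⟩ := MulAction.exists_smul_eq (Equiv.Perm (Fin n))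
    (⟨e.1, e.2⟩ : Set.powersetCard (Fin n) L) ⟨e'.1, e'.2⟩
  exact ⟨π, Subtype.ext (congrArg Subtype.val hπ)⟩

lemma edgeCoeff_permute (π : Equiv.Perm (Fin n)) (f g h : Edge n L) :
    edgeCoeff (Edge.permute π f) (Edge.permute π g) (Edge.permute π h) = edgeCoeff f g h := by
  simp only [edgeCoeff, Edge.permute, Equiv.coe_fn_mk, ← smul_finset_union, card_smul_finset]

lemma cubicGrad_edgeCoeff_const_eq (c : ℝ) (e e' : Edge n L) :
    cubicGrad edgeCoeff (fun _ => c) e = cubicGrad edgeCoeff (fun _ => c) e' := by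
  obtain ⟨π, rfl⟩ := Edge.exists_permute_eq e' e
  exact cubicGrad_const_apply_equiv _ _ (edgeCoeff_permute π) c e'

end Permutations

end Edges

section PairEdges

variable {n : ℕ}

lemma edgeCoeff_sum_six (e f g : Edge n 2) :
    24 * (edgeCoeff e f g + edgeCoeff f e g + edgeCoeff f g e
      + edgeCoeff e g f + edgeCoeff g e f + edgeCoeff g f e)
      = 24 / (6 - #(e.1 ∩ f.1) - #(e.1 ∩ g.1) - #(f.1 ∩ g.1) + #(e.1 ∩ f.1 ∩ g.1) : ℝ)
        * ((4 - #(e.1 ∩ f.1) : ℝ)⁻¹ + (4 - #(e.1 ∩ g.1) : ℝ)⁻¹ + (4 - #(f.1 ∩ g.1) : ℝ)⁻¹) := by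
  have hU : (#(e.1 ∪ f.1 ∪ g.1) : ℝ)
      = 6 - #(e.1 ∩ f.1) - #(e.1 ∩ g.1) - #(f.1 ∩ g.1) + #(e.1 ∩ f.1 ∩ g.1) := by
    have h : ((#(e.1 ∪ f.1 ∪ g.1) + #(e.1 ∩ f.1) + #(e.1 ∩ g.1) + #(f.1 ∩ g.1) : ℕ) : ℝ)
        = (2 + 2 + 2 + #(e.1 ∩ f.1 ∩ g.1) : ℕ) := by
      rw [card_union_union_add, e.2, f.2, g.2]
    push_cast at h
    linarith
  simp only [edgeCoeff]
  rw [show f.1 ∪ g.1 ∪ e.1 = e.1 ∪ f.1 ∪ g.1 by ac_rfl,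
    show g.1 ∪ e.1 ∪ f.1 = e.1 ∪ f.1 ∪ g.1 by ac_rfl,
    show g.1 ∪ f.1 ∪ e.1 = e.1 ∪ f.1 ∪ g.1 by ac_rfl,
    show f.1 ∪ e.1 ∪ g.1 = e.1 ∪ f.1 ∪ g.1 by ac_rfl,
    show e.1 ∪ g.1 ∪ f.1 = e.1 ∪ f.1 ∪ g.1 by ac_rfl]
  simp only [e.2, f.2, g.2, Edge.card_union, inter_comm f.1 e.1, inter_comm g.1 e.1,
    inter_comm g.1 f.1, mul_inv, ← hU]
  push_cast
  ring

lemma Edge.card_inter_bounds (e f g : Edge n 2) :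
    #(e.1 ∩ f.1 ∩ g.1) ≤ #(e.1 ∩ f.1) ∧ #(e.1 ∩ f.1 ∩ g.1) ≤ #(e.1 ∩ g.1) ∧
      #(e.1 ∩ f.1 ∩ g.1) ≤ #(f.1 ∩ g.1) ∧
      #(e.1 ∩ f.1) + #(e.1 ∩ g.1) ≤ 2 + #(e.1 ∩ f.1 ∩ g.1) ∧
      #(e.1 ∩ f.1) + #(f.1 ∩ g.1) ≤ 2 + #(e.1 ∩ f.1 ∩ g.1) ∧
      #(e.1 ∩ g.1) + #(f.1 ∩ g.1) ≤ 2 + #(e.1 ∩ f.1 ∩ g.1) := by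
  have he := card_inter_add_card_inter_le e.1 f.1 g.1
  have hf := card_inter_add_card_inter_le f.1 e.1 g.1
  have hg := card_inter_add_card_inter_le g.1 e.1 f.1
  rw [e.2] at he
  rw [inter_comm f.1 e.1, f.2] at hf
  rw [inter_comm g.1 e.1, inter_comm g.1 f.1, inter_right_comm, g.2] at hg
  refine ⟨card_le_card inter_subset_left, card_le_card ?_, card_le_card ?_, he, hf, hg⟩
  · rw [inter_right_comm]; exact inter_subset_left
  · rw [inter_assoc]; exact inter_subset_right

/- Weights of a sum-of-squares certificate for `48 * cubicGrad edgeCoeff · e`, as functions of the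
meet size `#(e ∩ f)`. They were found numerically and are not unique. -/
noncomputable def sosA : ℕ → ℝ | 0 => 1 / 3 | 1 => 14 / 27 | _ => 1
noncomputable def sosB : ℕ → ℝ | 0 => 288 / 295 | 1 => 1 | _ => 0
noncomputable def sosC : ℕ → ℝ | 0 => 1 | 1 => 3 / 2 | _ => 0
noncomputable def sosD : ℕ → ℝ | 0 => 1 | 1 => 5 / 6 | _ => 0

lemma sosD_nonneg (k : ℕ) : 0 ≤ sosD k := by
  unfold sosD; split <;> norm_num

noncomputable def gramEntry (a b i j : ℕ) : ℝ :=
  18 * (sosA a * sosA b) + 295 / 324 * (sosB a * sosB b)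
    + 39 / 295 * ((if a = 0 then 1 else 0) * (if b = 0 then 1 else 0))
    + 1 / 8 * ((if a = 1 then 1 else 0) * (if b = 1 then 1 else 0) * (4 * j - 2 * a - 2 * b + 2))
    + sosC a * sosC b * (i - j)
    + 1 / 4 * ((if a = 1 then 1 else 0) * (if b = 1 then 1 else 0) * (i - j))
    + (if i = 2 then sosD a else 0)

lemma gramEntry_eq {a b i j : ℕ} (hja : j ≤ a) (hjb : j ≤ b) (hji : j ≤ i)
    (hab : a + b ≤ 2 + j) (hai : a + i ≤ 2 + j) (hbi : b + i ≤ 2 + j) :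
    gramEntry a b i j
      = 24 / (6 - a - b - i + j : ℝ) * ((4 - a : ℝ)⁻¹ + (4 - b : ℝ)⁻¹ + (4 - i : ℝ)⁻¹) := by
  have ha : a ≤ 2 := by omega
  have hb : b ≤ 2 := by omega
  have hi : i ≤ 2 := by omega
  interval_cases a <;> interval_cases b <;> interval_cases i <;> interval_cases j <;>
    first | omega | norm_num [gramEntry, sosA, sosB, sosC, sosD]

noncomputable def sosForm (e : Edge n 2) (y : Edge n 2 → ℝ) : ℝ :=
  18 * (∑ f, sosA #(e.1 ∩ f.1) * y f) ^ 2
    + 295 / 324 * (∑ f, sosB #(e.1 ∩ f.1) * y f) ^ 2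
    + 39 / 295 * (∑ f, (if #(e.1 ∩ f.1) = 0 then 1 else 0) * y f) ^ 2
    + 1 / 8 * ∑ c ∈ e.1,
        (∑ f, (if #(e.1 ∩ f.1) = 1 then 1 else 0) * (if c ∈ f.1 then 1 else -1) * y f) ^ 2
    + ∑ c ∈ e.1ᶜ, (∑ f, sosC #(e.1 ∩ f.1) * (if c ∈ f.1 then 1 else 0) * y f) ^ 2
    + 1 / 4 * ∑ c ∈ e.1ᶜ,
        (∑ f, (if #(e.1 ∩ f.1) = 1 then 1 else 0) * (if c ∈ f.1 then 1 else 0) * y f) ^ 2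
    + ∑ f, sosD #(e.1 ∩ f.1) * y f ^ 2

lemma sosForm_nonneg (e : Edge n 2) (y : Edge n 2 → ℝ) : 0 ≤ sosForm e y := by
  have hdiag : 0 ≤ ∑ f, sosD #(e.1 ∩ f.1) * y f ^ 2 :=
    sum_nonneg fun f _ => mul_nonneg (sosD_nonneg _) (sq_nonneg _)
  unfold sosForm
  positivity

lemma sosForm_eq_sum_sum (e : Edge n 2) (y : Edge n 2 → ℝ) :
    sosForm e y = ∑ f, ∑ g,
      gramEntry #(e.1 ∩ f.1) #(e.1 ∩ g.1) #(f.1 ∩ g.1) #(e.1 ∩ f.1 ∩ g.1) * (y f * y g) := by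
  rw [sosForm]
  simp only [sum_sq_sum_mul_eq_sum_sum]
  simp only [sq_sum_mul_eq_sum_sum, sum_mul_sq_eq_sum_sum, mul_sum, ← sum_add_distrib]
  refine sum_congr rfl fun f _ => sum_congr rfl fun g _ => ?_
  have hfactor : ∀ (s : Finset (Fin n)) (p q : ℝ) (u w : Fin n → ℝ),
      ∑ c ∈ s, p * u c * (q * w c) = p * q * ∑ c ∈ s, u c * w c := fun s p q u w => by
    rw [mul_sum]; exact sum_congr rfl fun _ _ => by ring
  simp only [hfactor, sum_sign_mul_sign, sum_compl_boole_mul_boole, Edge.eq_iff_card_inter, e.2,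
    gramEntry]
  push_cast
  ring

lemma cubicGrad_edgeCoeff_eq_sosForm (y : Edge n 2 → ℝ) (e : Edge n 2) :
    48 * cubicGrad edgeCoeff y e = sosForm e y := by
  rw [sosForm_eq_sum_sum, cubicGrad_eq_sum_sum, mul_sum]
  refine sum_congr rfl fun f _ => ?_
  rw [mul_sum]
  refine sum_congr rfl fun g _ => ?_
  obtain ⟨hja, hjb, hji, hab, hai, hbi⟩ := Edge.card_inter_bounds e f g
  rw [gramEntry_eq hja hjb hji hab hai hbi, ← edgeCoeff_sum_six]
  ring

lemma cubicGrad_edgeCoeff_nonneg (y : Edge n 2 → ℝ) (e : Edge n 2) :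
    0 ≤ cubicGrad edgeCoeff y e := by
  linarith [cubicGrad_edgeCoeff_eq_sosForm y e, sosForm_nonneg e y]

end PairEdges

/-- For `d = 3` and `L = 2`, `f_3` attains its global minimum over the standard simplex
at the barycenter. -/
theorem stmt13 (n : ℕ) (hn : 2 ≤ n) :
    ∀ x ∈ stdSimplex ℝ (Edge n 2),
      fPoly n 2 3 (fun _ => ((n.choose 2 : ℝ))⁻¹) ≤ fPoly n 2 3 x := by
  rintro x ⟨hx, hx_sum⟩
  have hcard : Fintype.card (Edge n 2) = n.choose 2 := by simp
  obtain ⟨e₀⟩ : Nonempty (Edge n 2) := by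
    rw [← Fintype.card_pos_iff, hcard]
    exact Nat.choose_pos hn
  have hm : (n.choose 2 : ℝ) ≠ 0 := by exact_mod_cast (Nat.choose_pos hn).ne'
  rw [fPoly_three_eq_trilinForm, fPoly_three_eq_trilinForm]
  refine trilinForm_self_le_of_cubicGrad _ hx (fun _ => by positivity) ?_
    ⟨_, fun e => cubicGrad_edgeCoeff_const_eq _ e e₀⟩ cubicGrad_edgeCoeff_nonneg
  rw [hx_sum, sum_const, card_univ, hcard, nsmul_eq_mul, mul_inv_cancel₀ hm]
end

section
/- For degree d = 3 and edge size L = 2, the polynomial f_3 is convex on the standard simplex Δ_m; equivalently, its Hessian matrix H(f_3)(x) = (∂²f_3(x)/∂x_e ∂x_f)_{e,f ∈ E} is positive semidefinite at every point x ∈ Δ_m. -/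
open Finset

/-!
Write `f_3` as the cubic form `F(x) = ∑ w(a,b,c) x_a x_b x_c` with
`w(a,b,c) = 1 / (|a| |a ∪ b| |a ∪ b ∪ c|)`. For `a + b = 1` one has the exact identity
`a F(x) + b F(y) - F(a x + b y) = (ab/3) ∑_e ((1+a) x_e + (1+b) y_e) ∂_e F(x - y)`,
so `F` is convex on the nonnegative orthant as soon as every partial derivative `∂_e F`, a
quadratic form, is positive semidefinite. For `e = {p, q}` the symmetrised coefficient of
`v_f v_g` in `2 ∂_e F(v)` depends only on how `f` and `g` meet `p` and `q` and on
`|(f ∩ g) \ e|`, and it equals an explicit nonnegative combination of rank-one matrices, Gram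
matrices of the overlaps outside `e`, and a nonnegative diagonal; this is checked on the finitely
many incidence patterns.
-/

section CubicForm

open Matrix

variable {ι : Type*} [Fintype ι] (w : ι → ι → ι → ℝ)

def cubicForm (x : ι → ℝ) : ℝ := ∑ a, ∑ b, ∑ c, w a b c * (x a * x b * x c)

/-- `∂F/∂x_e` at `v`, where `F = cubicForm w`. -/
def cubicFormPartial (e : ι) (v : ι → ℝ) : ℝ :=
  ∑ f, ∑ g, (w e f g + w f e g + w f g e) * (v f * v g)

lemma sum_mul_cubicFormPartial (z v : ι → ℝ) :
    ∑ e, z e * cubicFormPartial w e v =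
      ∑ a, ∑ b, ∑ c, w a b c * (z a * v b * v c + v a * z b * v c + v a * v b * z c) := by
  have h₂ : ∑ e, ∑ f, ∑ g, z e * (w f e g * (v f * v g)) =
      ∑ a, ∑ b, ∑ c, w a b c * (v a * z b * v c) := by
    rw [sum_comm]; exact sum_congr rfl fun _ _ => sum_congr rfl fun _ _ => sum_congr rfl
      fun _ _ => by ring
  have h₃ : ∑ e, ∑ f, ∑ g, z e * (w f g e * (v f * v g)) =
      ∑ a, ∑ b, ∑ c, w a b c * (v a * v b * z c) := by
    rw [← sum_comm_cycle]; exact sum_congr rfl fun _ _ => sum_congr rfl fun _ _ => sum_congr rfl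
      fun _ _ => by ring
  simp only [cubicFormPartial, mul_sum, add_mul, mul_add, sum_add_distrib, h₂, h₃]
  congr 2
  exact sum_congr rfl fun _ _ => sum_congr rfl fun _ _ => sum_congr rfl fun _ _ => by ring

lemma cubicForm_jensen_gap (x y : ι → ℝ) {a b : ℝ} (hab : a + b = 1) :
    a * cubicForm w x + b * cubicForm w y - cubicForm w (a • x + b • y) =
      a * b / 3 * ∑ e, ((1 + a) * x e + (1 + b) * y e) * cubicFormPartial w e (x - y) := by
  obtain rfl : b = 1 - a := by linarith
  rw [sum_mul_cubicFormPartial]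
  simp only [cubicForm, mul_sum, ← sum_add_distrib, ← sum_sub_distrib]
  exact sum_congr rfl fun _ _ => sum_congr rfl fun _ _ => sum_congr rfl fun _ _ => by
    simp only [Pi.add_apply, Pi.smul_apply, Pi.sub_apply, smul_eq_mul]; ring

theorem convexOn_cubicForm_of_cubicFormPartial_nonneg (h : ∀ e v, 0 ≤ cubicFormPartial w e v) :
    ConvexOn ℝ (Set.Ici 0) (cubicForm w) := by
  refine ⟨convex_Ici 0, fun x hx y hy a b ha hb hab => ?_⟩
  have hgap := cubicForm_jensen_gap w x y hab
  have : 0 ≤ a * b / 3 * ∑ e, ((1 + a) * x e + (1 + b) * y e) * cubicFormPartial w e (x - y) :=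
    mul_nonneg (by positivity) <| sum_nonneg fun e _ => by
      have hxe : 0 ≤ x e := hx e
      have hye : 0 ≤ y e := hy e
      exact mul_nonneg (by positivity) (h e _)
  simp only [smul_eq_mul]
  linarith

lemma two_mul_cubicFormPartial (e : ι) (v : ι → ℝ) :
    2 * cubicFormPartial w e v =
      ∑ f, ∑ g, (w e f g + w e g f + w f e g + w g e f + w f g e + w g f e) * (v f * v g) := by
  have hswap : cubicFormPartial w e v =
      ∑ f, ∑ g, (w e g f + w g e f + w g f e) * (v f * v g) := by
    rw [cubicFormPartial, sum_comm]
    exact sum_congr rfl fun _ _ => sum_congr rfl fun _ _ => by ring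
  rw [two_mul]
  nth_rw 2 [hswap]
  simp only [cubicFormPartial, ← sum_add_distrib]
  exact sum_congr rfl fun _ _ => sum_congr rfl fun _ _ => by ring

lemma cubicFormPartial_nonneg_of_posSemidef {e : ι} {M : Matrix ι ι ℝ} (hM : M.PosSemidef)
    (hw : ∀ f g, w e f g + w e g f + w f e g + w g e f + w f g e + w g f e = M f g)
    (v : ι → ℝ) : 0 ≤ cubicFormPartial w e v := by
  have h₂ := two_mul_cubicFormPartial w e v
  have hv := hM.dotProduct_mulVec_nonneg v
  simp only [star_trivial, dotProduct, mulVec, mul_sum] at hv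
  simp only [hw] at h₂
  have : ∑ f, ∑ g, v f * (M f g * v g) = ∑ f, ∑ g, M f g * (v f * v g) :=
    sum_congr rfl fun _ _ => sum_congr rfl fun _ _ => by ring
  linarith

end CubicForm

section PairIncidence

variable {α : Type*} [DecidableEq α] {p q u : α} {s t : Finset α}

def memInd (u : α) (s : Finset α) : ℕ := if u ∈ s then 1 else 0

lemma memInd_le_one : memInd u s ≤ 1 := by
  unfold memInd; split_ifs <;> simp

lemma memInd_inter : memInd u (s ∩ t) = memInd u s * memInd u t := by
  by_cases hs : u ∈ s <;> by_cases ht : u ∈ t <;> simp [memInd, hs, ht]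

lemma sum_memInd_mul_memInd_compl [Fintype α] (s t u : Finset α) :
    ∑ x ∈ sᶜ, (memInd x t * memInd x u : ℝ) = #((t ∩ u) \ s) := by
  rw [sdiff_eq_inter_compl]
  simp_rw [← Nat.cast_mul, ← memInd_inter]
  simp only [memInd, Nat.cast_ite, Nat.cast_one, Nat.cast_zero]
  rw [sum_boole, filter_mem_eq_inter, inter_comm]

lemma card_inter_pair (hpq : p ≠ q) (s : Finset α) :
    #(s ∩ {p, q}) = memInd p s + memInd q s := by
  rw [inter_comm, ← filter_mem_eq_inter, card_filter, sum_pair hpq, memInd, memInd]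

lemma card_sdiff_pair_add (hpq : p ≠ q) (s : Finset α) :
    #(s \ {p, q}) + memInd p s + memInd q s = #s := by
  rw [add_assoc, ← card_inter_pair hpq, add_comm, card_inter_add_card_sdiff]

lemma card_inter_sdiff_pair_add (hpq : p ≠ q) (s t : Finset α) :
    #((s ∩ t) \ {p, q}) + memInd p s * memInd p t + memInd q s * memInd q t = #(s ∩ t) := by
  rw [← memInd_inter, ← memInd_inter, card_sdiff_pair_add hpq]

lemma card_inter_sdiff_pair_add_le (hpq : p ≠ q) (s t : Finset α) :
    #((s ∩ t) \ {p, q}) + memInd p s + memInd q s ≤ #s := by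
  have hsub : (s ∩ t) \ {p, q} ⊆ s \ {p, q} := sdiff_subset_sdiff inter_subset_left subset_rfl
  have := card_le_card hsub
  have := card_sdiff_pair_add hpq s
  omega

lemma eq_iff_card_inter_eq {k : ℕ} (hs : #s = k) (ht : #t = k) : s = t ↔ #(s ∩ t) = k := by
  refine ⟨by rintro rfl; rwa [inter_self], fun h => ?_⟩
  have hst : s ∩ t = s := eq_of_subset_of_card_le inter_subset_left (by omega)
  exact eq_of_subset_of_card_le (inter_eq_left.mp hst) (by omega)

lemma card_pair_union_add (hpq : p ≠ q) (f : Finset α) :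
    #({p, q} ∪ f) + memInd p f + memInd q f = 2 + #f := by
  have := card_union_add_card_inter {p, q} f
  rw [inter_comm, card_inter_pair hpq, card_pair hpq] at this
  omega

lemma card_pair_union_union_add (hpq : p ≠ q) (f g : Finset α) :
    #({p, q} ∪ f ∪ g) + memInd p f + memInd q f + memInd p g + memInd q g
      + #((f ∩ g) \ {p, q}) = 2 + #f + #g := by
  have h₁ := card_union_add_card_inter ({p, q} ∪ f) g
  have h₂ := card_inter_add_card_sdiff (({p, q} ∪ f) ∩ g) {p, q}
  have h₃ : ({p, q} ∪ f) ∩ g ∩ {p, q} = g ∩ {p, q} := by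
    ext; simp only [mem_inter, mem_union]; tauto
  have h₄ : (({p, q} ∪ f) ∩ g) \ {p, q} = (f ∩ g) \ {p, q} := by
    ext; simp only [mem_inter, mem_union, mem_sdiff]; tauto
  rw [h₃, h₄, card_inter_pair hpq] at h₂
  have h₅ := card_pair_union_add hpq f
  omega

end PairIncidence

theorem Fintype.sum_fin_three_arrow {α M : Type*} [Fintype α] [AddCommMonoid M]
    (F : (Fin 3 → α) → M) : ∑ t, F t = ∑ a, ∑ b, ∑ c, F ![a, b, c] := by
  simp only [← (Fin.consEquiv fun _ => α).sum_comp, Fintype.sum_prod_type, Fintype.sum_unique]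
  rfl

noncomputable section

open Matrix

variable {n : ℕ}

def edgeWeight {L : ℕ} (a b c : Edge n L) : ℝ :=
  ((#a.1 : ℝ) * #(a.1 ∪ b.1) * #(a.1 ∪ b.1 ∪ c.1))⁻¹

lemma fPoly_three_eq_cubicForm (L : ℕ) : fPoly n L 3 = cubicForm edgeWeight := by
  ext x
  rw [fPoly, Fintype.sum_fin_three_arrow]
  refine sum_congr rfl fun a _ => sum_congr rfl fun b _ => sum_congr rfl fun c _ => ?_
  have h₀ : Iic (0 : Fin 3) = {0} := by decide
  have h₁ : Iic (1 : Fin 3) = {0, 1} := by decide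
  have h₂ : Iic (2 : Fin 3) = {0, 1, 2} := by decide
  simp only [Fin.prod_univ_three, h₀, h₁, h₂, singleton_biUnion, biUnion_insert,
    cons_val_zero, cons_val_one, cons_val_two, tail_cons, head_cons, ← union_assoc, edgeWeight]
  ring

lemma edgeWeight_perm_sum (e f g : Edge n 2) :
    edgeWeight e f g + edgeWeight e g f + edgeWeight f e g + edgeWeight g e f
      + edgeWeight f g e + edgeWeight g f e =
      (#(e.1 ∪ f.1) * #(e.1 ∪ f.1 ∪ g.1) : ℝ)⁻¹ + (#(e.1 ∪ g.1) * #(e.1 ∪ f.1 ∪ g.1) : ℝ)⁻¹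
        + (#(f.1 ∪ g.1) * #(e.1 ∪ f.1 ∪ g.1) : ℝ)⁻¹ := by
  simp only [edgeWeight, e.2, f.2, g.2, union_comm f.1 e.1, union_comm g.1 e.1,
    union_comm g.1 f.1, union_right_comm e.1 g.1 f.1, union_comm (f.1 ∪ g.1) e.1, ← union_assoc]
  ring

/-- With `a = [p ∈ f]` and `b = [q ∈ f]` for an edge `f`, `pairDisj a b`, `pairOnce a b` and `a * b`
are the indicators of `#(f ∩ {p, q})` being `0`, `1` and `2`. -/
def pairDisj (a b : ℝ) : ℝ := (1 - a) * (1 - b)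
def pairOnce (a b : ℝ) : ℝ := a + b - 2 * (a * b)
def sosVec₁ (a b : ℝ) : ℝ := a * b + 14 / 27 * pairOnce a b + 1 / 3 * pairDisj a b
def sosVec₂ (a b : ℝ) : ℝ := pairOnce a b + 288 / 295 * pairDisj a b
def sosVec₃ (a b : ℝ) : ℝ := pairOnce a b + 18 / 35 * pairDisj a b

def sosKernel (a b a' b' m : ℝ) : ℝ :=
  3 / 4 * (sosVec₁ a b * sosVec₁ a' b') + 295 / 7776 * (sosVec₂ a b * sosVec₂ a' b')
    + 13 / 2360 * (pairDisj a b * pairDisj a' b') + 1 / 96 * ((a - b) * (a' - b'))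
    + m * (35 / 288 * (sosVec₃ a b * sosVec₃ a' b') + 1 / 105 * (pairDisj a b * pairDisj a' b')
      + 5 / 288 * ((a - b) * (a' - b')))

/-- Here `iⱼ`, `kⱼ` are the incidences of edges `f`, `g` with `p`, `q` and
`m = #((f ∩ g) \ {p, q})`; for `e = {p, q}` the denominators are `|e ∪ f|`, `|e ∪ g|`, `|f ∪ g|`
times `|e ∪ f ∪ g|`, and `m + i₁ k₁ + i₂ k₂ = |f ∩ g|` equals `2` exactly when `f = g`. -/
lemma inv_add_inv_add_inv_eq_sosKernel {i₁ i₂ k₁ k₂ m : ℕ} (hi₁ : i₁ ≤ 1) (hi₂ : i₂ ≤ 1)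
    (hk₁ : k₁ ≤ 1) (hk₂ : k₂ ≤ 1) (hi : m + i₁ + i₂ ≤ 2) (hk : m + k₁ + k₂ ≤ 2) :
    ((4 - i₁ - i₂ : ℝ) * (6 - i₁ - i₂ - k₁ - k₂ - m))⁻¹
      + ((4 - k₁ - k₂ : ℝ) * (6 - i₁ - i₂ - k₁ - k₂ - m))⁻¹
      + ((4 - m - i₁ * k₁ - i₂ * k₂ : ℝ) * (6 - i₁ - i₂ - k₁ - k₂ - m))⁻¹
      = sosKernel i₁ i₂ k₁ k₂ m + if m + i₁ * k₁ + i₂ * k₂ = 2 then pairDisj i₁ i₂ / 24 else 0 := by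
  have hm : m ≤ 2 := by omega
  interval_cases i₁ <;> interval_cases i₂ <;> interval_cases k₁ <;> interval_cases k₂ <;>
    interval_cases m <;> first
      | (exfalso; omega)
      | norm_num [sosKernel, sosVec₁, sosVec₂, sosVec₃, pairDisj, pairOnce]

def pairFeature (φ : ℝ → ℝ → ℝ) (p q : Fin n) (f : Edge n 2) : ℝ :=
  φ (memInd p f.1) (memInd q f.1)

/-- A sum-of-squares decomposition found numerically; the sum over `u ∉ {p, q}` realises the
factor `#((f ∩ g) \ {p, q})` of `sosKernel` as a sum of Gram matrices. -/
def sosMatrix (p q : Fin n) : Matrix (Edge n 2) (Edge n 2) ℝ :=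
  (3 / 4 : ℝ) • vecMulVec (pairFeature sosVec₁ p q) (pairFeature sosVec₁ p q)
    + (295 / 7776 : ℝ) • vecMulVec (pairFeature sosVec₂ p q) (pairFeature sosVec₂ p q)
    + (13 / 2360 : ℝ) • vecMulVec (pairFeature pairDisj p q) (pairFeature pairDisj p q)
    + (1 / 96 : ℝ) • vecMulVec (pairFeature (· - ·) p q) (pairFeature (· - ·) p q)
    + (∑ u ∈ {p, q}ᶜ, let χ (f : Edge n 2) : ℝ := memInd u f.1
      ((35 / 288 : ℝ) • vecMulVec (χ * pairFeature sosVec₃ p q) (χ * pairFeature sosVec₃ p q)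
        + (1 / 105 : ℝ) • vecMulVec (χ * pairFeature pairDisj p q) (χ * pairFeature pairDisj p q)
        + (5 / 288 : ℝ) • vecMulVec (χ * pairFeature (· - ·) p q) (χ * pairFeature (· - ·) p q)))
    + diagonal fun f => pairFeature pairDisj p q f / 24

lemma posSemidef_smul_vecMulVec_self {κ : Type*} [Fintype κ] {c : ℝ} (hc : 0 ≤ c) (φ : κ → ℝ) :
    (c • vecMulVec φ φ).PosSemidef :=
  (posSemidef_vecMulVec_self_star φ).smul hc

lemma posSemidef_sosMatrix (p q : Fin n) : (sosMatrix p q).PosSemidef := by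
  have hdisj : 0 ≤ fun f => pairFeature pairDisj p q f / 24 := fun f => by
    show 0 ≤ pairFeature pairDisj p q f / 24
    unfold pairFeature pairDisj memInd; split_ifs <;> norm_num
  refine .add (.add (.add (.add (.add ?_ ?_) ?_) ?_)
    (posSemidef_sum _ fun u _ => .add (.add ?_ ?_) ?_)) (.diagonal hdisj) <;>
    exact posSemidef_smul_vecMulVec_self (by norm_num) _

lemma sosMatrix_apply (p q : Fin n) (f g : Edge n 2) :
    sosMatrix p q f g = sosKernel (memInd p f.1) (memInd q f.1) (memInd p g.1) (memInd q g.1)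
      #((f.1 ∩ g.1) \ {p, q})
      + if f = g then pairDisj (memInd p f.1) (memInd q f.1) / 24 else 0 := by
  simp only [sosMatrix, Matrix.add_apply, Matrix.smul_apply, vecMulVec_apply, Matrix.sum_apply,
    diagonal_apply, Pi.mul_apply, smul_eq_mul]
  rw [← sum_memInd_mul_memInd_compl, sosKernel, sum_mul]
  simp only [pairFeature]
  congr 2
  exact sum_congr rfl fun _ _ => by ring

lemma edgeWeight_perm_sum_eq_sosMatrix {p q : Fin n} (hpq : p ≠ q) {e : Edge n 2}
    (he : e.1 = {p, q}) (f g : Edge n 2) :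
    edgeWeight e f g + edgeWeight e g f + edgeWeight f e g + edgeWeight g e f
      + edgeWeight f g e + edgeWeight g f e = sosMatrix p q f g := by
  obtain ⟨f, hf⟩ := f
  obtain ⟨g, hg⟩ := g
  have hm := card_inter_sdiff_pair_add hpq f g
  have hA : (#({p, q} ∪ f) : ℝ) = 4 - memInd p f - memInd q f := by
    have h := congrArg (Nat.cast : ℕ → ℝ) (card_pair_union_add hpq f)
    push_cast [hf] at h; linarith
  have hB : (#({p, q} ∪ g) : ℝ) = 4 - memInd p g - memInd q g := by
    have h := congrArg (Nat.cast : ℕ → ℝ) (card_pair_union_add hpq g)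
    push_cast [hg] at h; linarith
  have hC : (#(f ∪ g) : ℝ) =
      4 - #((f ∩ g) \ {p, q}) - memInd p f * memInd p g - memInd q f * memInd q g := by
    have h₁ := congrArg (Nat.cast : ℕ → ℝ) (card_union_add_card_inter f g)
    have h₂ := congrArg (Nat.cast : ℕ → ℝ) hm
    push_cast [hf, hg] at h₁ h₂; linarith
  have hN : (#({p, q} ∪ f ∪ g) : ℝ) =
      6 - memInd p f - memInd q f - memInd p g - memInd q g - #((f ∩ g) \ {p, q}) := by
    have h := congrArg (Nat.cast : ℕ → ℝ) (card_pair_union_union_add hpq f g)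
    push_cast [hf, hg] at h; linarith
  have hbf := card_inter_sdiff_pair_add_le hpq f g
  have hbg := card_inter_sdiff_pair_add_le hpq g f
  rw [hf] at hbf
  rw [inter_comm, hg] at hbg
  rw [edgeWeight_perm_sum, sosMatrix_apply, he]
  simp only [Subtype.mk.injEq, eq_iff_card_inter_eq hf hg, ← hm]
  rw [hA, hB, hC, hN]
  exact inv_add_inv_add_inv_eq_sosKernel memInd_le_one memInd_le_one memInd_le_one memInd_le_one
    hbf hbg

lemma cubicFormPartial_edgeWeight_nonneg (e : Edge n 2) (v : Edge n 2 → ℝ) :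
    0 ≤ cubicFormPartial edgeWeight e v := by
  obtain ⟨p, q, hpq, he⟩ := card_eq_two.mp e.2
  exact cubicFormPartial_nonneg_of_posSemidef edgeWeight (posSemidef_sosMatrix p q)
    (edgeWeight_perm_sum_eq_sosMatrix hpq he) v

end

theorem stmt14_general (n : ℕ) :
    ConvexOn ℝ (stdSimplex ℝ (Edge n 2)) (fPoly n 2 3) := by
  rw [fPoly_three_eq_cubicForm]
  exact (convexOn_cubicForm_of_cubicFormPartial_nonneg edgeWeight
    cubicFormPartial_edgeWeight_nonneg).subset (fun x hx => hx.1) (convex_stdSimplex ℝ _)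

/-- For `d = 3` and `L = 2`, `f_3` is convex on the standard simplex. -/
theorem stmt14 (n : ℕ) (hn : 2 ≤ n) :
    ConvexOn ℝ (stdSimplex ℝ (Edge n 2)) (fPoly n 2 3) :=
  stmt14_general n
end

section
/- For every integer d ≥ 3 and every γ ∈ ℕ^m with |γ| = d−2, the matrix Q_γ admits the recursive Hadamard-product decomposition Q_γ = M_γ ∘ ( Σ_{k ∈ {1,…,m} : γ_k ≥ 1} Q_{γ−u_k} + R_γ ), where M_γ := (ĉ_{γ+u_i+u_j})_{i,j=1}^m, R_γ := (1/γ!)·( b̂_{γ+u_i} + b̂_{γ+u_j} )_{i,j=1}^m with b̂_α := α!·b_α, and ∘ denotes the entrywise (Hadamard) product. -/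
/-
Write `b̂_α = α! b_α`. Splitting off the last entry of a tuple, whose prefix union is then the
union of all edges in the support of `α`, gives `b_α = ĉ_α ∑_{k : α_k ≥ 1} b_{α - u_k}`, that is
`b̂_α = ĉ_α ∑_k α_k b̂_{α - u_k}`. Since `(Q_γ)_{ij} = b̂_{γ+u_i+u_j} / γ!`, apply this to
`α = γ + u_i + u_j` and split `α_k = γ_k + [k = i] + [k = j]`: the `γ_k` part gives
`∑_k (Q_{γ-u_k})_{ij}`, and the two indicator terms give `b̂_{γ+u_j} / γ!` and `b̂_{γ+u_i} / γ!`,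
which is `(R_γ)_{ij}`.
-/

open Finset Matrix

/-- `ĉ_α = 1/|⋃_{ℓ : α_ℓ ≥ 1} e_ℓ|`. -/
noncomputable def cHat (n L : ℕ) (α : Edge n L → ℕ) : ℝ :=
  (((Finset.univ.filter fun ℓ : Edge n L => 1 ≤ α ℓ).biUnion fun ℓ => ℓ.1).card : ℝ)⁻¹

/-- `b_α := ∑_{ē ∈ E^{|α|} : α(ē) = α} ∏_{r=1}^{|α|} 1/|e_{i_1} ∪ ⋯ ∪ e_{i_r}|`, where
`α(ē)` records the multiplicity of each edge in the tuple `ē`. -/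
noncomputable def bCoef (n L : ℕ) (α : Edge n L → ℕ) : ℝ :=
  ∑ t ∈ (Finset.univ : Finset (Fin (∑ ℓ, α ℓ) → Edge n L)).filter
      (fun t => ∀ ℓ, (Finset.univ.filter fun r => t r = ℓ).card = α ℓ),
    ∏ i, (((Finset.Iic i).biUnion fun r => (t r).1).card : ℝ)⁻¹

/-- `b̂_α := α! · b_α`. -/
noncomputable def bHat (n L : ℕ) (α : Edge n L → ℕ) : ℝ :=
  (∏ ℓ, ((α ℓ).factorial : ℝ)) * bCoef n L α

/-- The symmetric matrix `Q_γ` with `(Q_γ)_{ij} = (γ_i+1)(γ_j+1) b_{γ+u_i+u_j}` off the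
diagonal and `(Q_γ)_{ii} = (γ_i+1)(γ_i+2) b_{γ+2u_i}`. -/
noncomputable def Qmat (n L : ℕ) (γ : Edge n L → ℕ) : Matrix (Edge n L) (Edge n L) ℝ :=
  Matrix.of fun i j =>
    if i = j then
      (((γ i + 1) * (γ i + 2) : ℕ) : ℝ) * bCoef n L (fun ℓ => γ ℓ + if ℓ = i then 2 else 0)
    else
      (((γ i + 1) * (γ j + 1) : ℕ) : ℝ) *
        bCoef n L (fun ℓ => γ ℓ + (if ℓ = i then 1 else 0) + (if ℓ = j then 1 else 0))

/-- The matrix `M_γ = (ĉ_{γ+u_i+u_j})_{i,j}`. -/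
noncomputable def Mgamma (n L : ℕ) (γ : Edge n L → ℕ) : Matrix (Edge n L) (Edge n L) ℝ :=
  Matrix.of fun i j =>
    cHat n L (fun ℓ => γ ℓ + (if ℓ = i then 1 else 0) + (if ℓ = j then 1 else 0))

/-- The matrix `R_γ = (1/γ!)(b̂_{γ+u_i} + b̂_{γ+u_j})_{i,j}`. -/
noncomputable def Rgamma (n L : ℕ) (γ : Edge n L → ℕ) : Matrix (Edge n L) (Edge n L) ℝ :=
  Matrix.of fun i j =>
    (∏ ℓ, ((γ ℓ).factorial : ℝ))⁻¹ *
      (bHat n L (fun ℓ => γ ℓ + if ℓ = i then 1 else 0)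
        + bHat n L (fun ℓ => γ ℓ + if ℓ = j then 1 else 0))

open scoped Nat

section

variable {ι R : Type*} [DecidableEq ι] [CommSemiring R]

lemma prod_factorial_add_single [Fintype ι] (f : ι → ℕ) (i : ι) :
    ∏ ℓ, (((f + Pi.single i 1 : ι → ℕ) ℓ)! : R) = (f i + 1) * ∏ ℓ, ((f ℓ)! : R) := by
  have hcompl : ∀ ℓ ∈ ({i}ᶜ : Finset ι), (((f + Pi.single i 1 : ι → ℕ) ℓ)! : R) = (f ℓ)! :=
    fun ℓ hℓ => by simp [show ℓ ≠ i by simpa using hℓ]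
  rw [Fintype.prod_eq_mul_prod_compl i, Finset.prod_congr rfl hcompl,
    Fintype.prod_eq_mul_prod_compl i (fun ℓ => ((f ℓ)! : R))]
  simp [Nat.factorial_succ, mul_assoc]

lemma add_single_eq_iff {f α : ι → ℕ} {k : ι} :
    f + Pi.single k 1 = α ↔ 1 ≤ α k ∧ f = α - Pi.single k 1 := by
  constructor
  · rintro rfl
    exact ⟨by simp, (add_tsub_cancel_right _ _).symm⟩
  · rintro ⟨hk, rfl⟩
    funext ℓ
    by_cases h : ℓ = k
    · subst h; simp; omega
    · simp [h]

lemma prod_factorial_eq_mul_sub_single [Fintype ι] {f : ι → ℕ} {k : ι} (hk : 1 ≤ f k) :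
    ∏ ℓ, ((f ℓ)! : R) = f k * ∏ ℓ, (((f - Pi.single k 1 : ι → ℕ) ℓ)! : R) := by
  conv_lhs => rw [← add_single_eq_iff.2 ⟨hk, rfl⟩, prod_factorial_add_single]
  rw [Pi.sub_apply, Pi.single_eq_same, ← Nat.cast_add_one, Nat.sub_add_cancel hk]

lemma sum_sub_single [Fintype ι] {α : ι → ℕ} {k : ι} (hk : 1 ≤ α k) :
    ∑ ℓ, (α - Pi.single k 1 : ι → ℕ) ℓ = ∑ ℓ, α ℓ - 1 := by
  rw [Fintype.sum_congr _ _ fun ℓ => Pi.sub_apply α (Pi.single k 1) ℓ, Finset.sum_tsub_distrib]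
  · simp
  · intro ℓ _; by_cases h : ℓ = k <;> simp [h, hk]

lemma sum_add_single_add_single_mul [Fintype ι] (γ : ι → ℕ) (i j : ι) (f : ι → R) :
    ∑ k, ((γ + Pi.single i 1 + Pi.single j 1 : ι → ℕ) k : R) * f k =
      ∑ k, (γ k : R) * f k + (f i + f j) := by
  simp [add_mul, Finset.sum_add_distrib, Pi.single_apply, add_assoc]

end

section Tuple

variable {β : Type*} [DecidableEq β] {d : ℕ}

def tupleCount (t : Fin d → β) (b : β) : ℕ := #{r | t r = b}

lemma tupleCount_snoc (t : Fin d → β) (b : β) :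
    tupleCount (Fin.snoc t b : Fin (d + 1) → β) = tupleCount t + Pi.single b 1 := by
  funext c
  simp only [tupleCount, Finset.card_filter, Fin.sum_univ_castSucc, Fin.snoc_castSucc,
    Fin.snoc_last, Pi.add_apply, Pi.single_apply, eq_comm (a := b)]

lemma filter_one_le_tupleCount [Fintype β] (t : Fin d → β) :
    ({b | 1 ≤ tupleCount t b} : Finset β) = univ.image t := by
  ext b
  simp [tupleCount, Nat.one_le_iff_ne_zero, Finset.filter_eq_empty_iff, Finset.card_eq_zero]

end Tuple

variable {n L : ℕ}

noncomputable def prefixWeight {d : ℕ} (t : Fin d → Edge n L) : ℝ :=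
  ∏ i, (((Finset.Iic i).biUnion fun r => (t r).1).card : ℝ)⁻¹

/-- The tuple length `d` (in `bCoef` it is `∑ ℓ, α ℓ`) is a separate argument so that it can be
rewritten independently of `α`. -/
noncomputable def tupleSum (d : ℕ) (α : Edge n L → ℕ) : ℝ :=
  ∑ t : Fin d → Edge n L with tupleCount t = α, prefixWeight t

lemma bCoef_eq_tupleSum (α : Edge n L → ℕ) : bCoef n L α = tupleSum (∑ ℓ, α ℓ) α :=
  Finset.sum_congr (Finset.filter_congr fun _ _ => funext_iff.symm) fun _ _ => rfl

lemma cHat_tupleCount {d : ℕ} (t : Fin d → Edge n L) :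
    cHat n L (tupleCount t) = ((univ.biUnion fun r => (t r).1).card : ℝ)⁻¹ := by
  rw [cHat, filter_one_le_tupleCount, Finset.image_biUnion]

lemma prefixWeight_snoc {d : ℕ} (t : Fin d → Edge n L) (k : Edge n L) :
    prefixWeight (Fin.snoc t k : Fin (d + 1) → Edge n L) =
      prefixWeight t * cHat n L (tupleCount (Fin.snoc t k : Fin (d + 1) → Edge n L)) := by
  simp only [prefixWeight, cHat_tupleCount, Fin.prod_univ_castSucc, ← Fin.map_castSuccEmb_Iic,
    Finset.map_eq_image, Finset.image_biUnion, Fin.coe_castSuccEmb, Fin.snoc_castSucc,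
    ← Fin.top_eq_last, Finset.Iic_top]

lemma tupleSum_succ (d : ℕ) (α : Edge n L → ℕ) :
    tupleSum (d + 1) α = cHat n L α * ∑ k with 1 ≤ α k, tupleSum d (α - Pi.single k 1) := by
  rw [tupleSum, Finset.sum_filter, ← (Fin.snocEquiv fun _ => Edge n L).sum_comp,
    Fintype.sum_prod_type, Finset.mul_sum, Finset.sum_filter]
  refine Fintype.sum_congr _ _ fun k => ?_
  have hsnoc (t : Fin d → Edge n L) : (Fin.snocEquiv fun _ => Edge n L) (k, t) = Fin.snoc t k :=
    funext fun _ => Fin.snocEquiv_apply _ _ _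
  simp only [hsnoc, tupleCount_snoc, prefixWeight_snoc]
  split_ifs with hk
  · rw [tupleSum, Finset.mul_sum, Finset.sum_filter]
    refine Fintype.sum_congr _ _ fun t => ?_
    have hiff : tupleCount t + Pi.single k 1 = α ↔ tupleCount t = α - Pi.single k 1 := by
      simp [add_single_eq_iff, hk]
    by_cases ht : tupleCount t + Pi.single k 1 = α
    · rw [if_pos ht, if_pos (hiff.1 ht), ht, mul_comm]
    · simp [ht, hiff.not.1 ht]
  · exact Finset.sum_eq_zero fun t _ => if_neg fun ht => hk (add_single_eq_iff.1 ht).1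

lemma bCoef_eq_cHat_mul_sum {α : Edge n L → ℕ} (hα : α ≠ 0) :
    bCoef n L α = cHat n L α * ∑ k with 1 ≤ α k, bCoef n L (α - Pi.single k 1) := by
  obtain ⟨s, hs⟩ : ∃ s, ∑ ℓ, α ℓ = s + 1 := Nat.exists_eq_succ_of_ne_zero <| by
    simpa [Finset.sum_eq_zero_iff, funext_iff] using hα
  rw [bCoef_eq_tupleSum, hs, tupleSum_succ]
  congr 1
  refine Finset.sum_congr rfl fun k hk => ?_
  rw [bCoef_eq_tupleSum, sum_sub_single (Finset.mem_filter.1 hk).2, hs, Nat.add_sub_cancel]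

lemma bHat_eq_cHat_mul_sum {α : Edge n L → ℕ} (hα : α ≠ 0) :
    bHat n L α = cHat n L α * ∑ k, (α k : ℝ) * bHat n L (α - Pi.single k 1) := by
  rw [bHat, bCoef_eq_cHat_mul_sum hα, mul_left_comm, Finset.mul_sum, Finset.sum_filter]
  congr 1
  refine Fintype.sum_congr _ _ fun k => ?_
  split_ifs with hk
  · rw [bHat, ← mul_assoc, ← prod_factorial_eq_mul_sub_single hk]
  · simp [show α k = 0 by omega]

section Matrices

variable (γ : Edge n L → ℕ) (i j : Edge n L)

lemma prod_factorial_ne_zero : (∏ ℓ, ((γ ℓ)! : ℝ)) ≠ 0 :=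
  Finset.prod_ne_zero_iff.2 fun ℓ _ => by positivity

lemma Qmat_apply_eq_bHat :
    Qmat n L γ i j = (∏ ℓ, ((γ ℓ)! : ℝ))⁻¹ * bHat n L (γ + Pi.single i 1 + Pi.single j 1) := by
  rw [bHat, prod_factorial_add_single, prod_factorial_add_single, Qmat, of_apply]
  split_ifs with hij
  · subst hij
    have hα : γ + Pi.single i 1 + Pi.single i 1 = fun ℓ => γ ℓ + if ℓ = i then 2 else 0 := by
      funext ℓ; by_cases h : ℓ = i <;> simp [h]
    rw [hα]
    field_simp [prod_factorial_ne_zero]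
    simp only [Nat.cast_mul, Nat.cast_add, Nat.cast_one, Nat.cast_ofNat, Pi.add_apply,
      Pi.single_eq_same]
    ring
  · have hα : γ + Pi.single i 1 + Pi.single j 1 =
        fun ℓ => γ ℓ + (if ℓ = i then 1 else 0) + (if ℓ = j then 1 else 0) := by
      funext ℓ; simp [Pi.single_apply]
    rw [hα]
    field_simp [prod_factorial_ne_zero]
    simp only [Nat.cast_mul, Nat.cast_add, Nat.cast_one, Pi.add_apply,
      Pi.single_eq_of_ne (Ne.symm hij), add_zero]
    ring

lemma Qmat_sub_single_apply {k : Edge n L} (hk : 1 ≤ γ k) :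
    Qmat n L (γ - Pi.single k 1) i j = (∏ ℓ, ((γ ℓ)! : ℝ))⁻¹ *
      (γ k * bHat n L (γ + Pi.single i 1 + Pi.single j 1 - Pi.single k 1)) := by
  have hα : γ - Pi.single k 1 + Pi.single i 1 + Pi.single j 1 =
      γ + Pi.single i 1 + Pi.single j 1 - Pi.single k 1 := by
    funext ℓ
    by_cases h : ℓ = k
    · subst h; simp [Pi.single_apply]; omega
    · simp [Pi.single_apply, h]
  rw [Qmat_apply_eq_bHat, prod_factorial_eq_mul_sub_single hk, hα]
  field_simp

lemma Mgamma_apply : Mgamma n L γ i j = cHat n L (γ + Pi.single i 1 + Pi.single j 1) := by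
  simp only [Mgamma, of_apply]
  congr
  funext ℓ
  simp [Pi.single_apply]

lemma Rgamma_apply : Rgamma n L γ i j = (∏ ℓ, ((γ ℓ)! : ℝ))⁻¹ *
    (bHat n L (γ + Pi.single i 1) + bHat n L (γ + Pi.single j 1)) := by
  simp only [Rgamma, of_apply]
  congr <;> funext ℓ <;> simp [Pi.single_apply]

lemma sum_Qmat_sub_single_apply :
    ∑ k with 1 ≤ γ k, Qmat n L (fun ℓ => γ ℓ - if ℓ = k then 1 else 0) i j =
      (∏ ℓ, ((γ ℓ)! : ℝ))⁻¹ *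
        ∑ k, γ k * bHat n L (γ + Pi.single i 1 + Pi.single j 1 - Pi.single k 1) := by
  have hsub (k : Edge n L) : (fun ℓ => γ ℓ - if ℓ = k then 1 else 0) = γ - Pi.single k 1 := by
    funext ℓ; simp [Pi.single_apply]
  rw [Finset.sum_congr rfl fun k hk => by
      rw [hsub, Qmat_sub_single_apply γ i j (Finset.mem_filter.1 hk).2],
    ← Finset.mul_sum, Finset.sum_filter_of_ne fun k _ hk => ?_]
  contrapose! hk
  simp [show γ k = 0 by omega]

end Matrices

theorem stmt18_general (n L : ℕ)
    (γ : Edge n L → ℕ) :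
    Qmat n L γ =
      (Mgamma n L γ) ⊙
        ((∑ k ∈ Finset.univ.filter (fun k : Edge n L => 1 ≤ γ k),
            Qmat n L (fun ℓ => γ ℓ - if ℓ = k then 1 else 0))
          + Rgamma n L γ) := by
  ext i j
  set P := ∏ ℓ, ((γ ℓ)! : ℝ)
  set α := γ + Pi.single i 1 + Pi.single j 1
  have hα : α ≠ 0 := fun h => by simpa [α] using congrFun h i
  have hα_sub_i : α - Pi.single i 1 = γ + Pi.single j 1 := by
    rw [show α = γ + Pi.single j 1 + Pi.single i 1 from add_right_comm _ _ _,
      add_tsub_cancel_right]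
  have hα_sub_j : α - Pi.single j 1 = γ + Pi.single i 1 := add_tsub_cancel_right _ _
  calc Qmat n L γ i j = P⁻¹ * bHat n L α := Qmat_apply_eq_bHat γ i j
    _ = cHat n L α * (P⁻¹ * ∑ k, γ k * bHat n L (α - Pi.single k 1) +
          P⁻¹ * (bHat n L (γ + Pi.single i 1) + bHat n L (γ + Pi.single j 1))) := by
      rw [bHat_eq_cHat_mul_sum hα, sum_add_single_add_single_mul, hα_sub_i, hα_sub_j]
      ring
    _ = _ := by
      rw [hadamard_apply, Matrix.add_apply, Matrix.sum_apply, Mgamma_apply, Rgamma_apply,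
        sum_Qmat_sub_single_apply]

/-- For `d ≥ 3` and `|γ| = d − 2`, the Hadamard-product recursion
`Q_γ = M_γ ∘ (∑_{k : γ_k ≥ 1} Q_{γ−u_k} + R_γ)`. -/
theorem stmt18 (n L d : ℕ) (hn : 2 ≤ n) (hL : 2 ≤ L) (hd : 3 ≤ d)
    (γ : Edge n L → ℕ) (hγ : ∑ ℓ, γ ℓ = d - 2) :
    Qmat n L γ =
      (Mgamma n L γ) ⊙
        ((∑ k ∈ Finset.univ.filter (fun k : Edge n L => 1 ≤ γ k),
            Qmat n L (fun ℓ => γ ℓ - if ℓ = k then 1 else 0))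
          + Rgamma n L γ) :=
  stmt18_general n L γ
end
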